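/- arXiv:2603.10439 — 6 statements merged into one kernel-verified Lean document; each statement's English description precedes it below -/
import Mathlib

section
/- For every k ∈ (−1,1) with k ≠ 0, the function K is differentiable at k with K′(k) = −K(k)/k + E(k)/(k(1−k²)), and the function E is differentiable at k with E′(k) = (E(k) − K(k))/k. -/
open Real Set MeasureTheory intervalIntegral

/-- Complete elliptic integral of the first kind. -/
noncomputable def Kc (k : ℝ) : ℝ :=
  ∫ z in (0:ℝ)..1, 1 / Real.sqrt ((1 - z ^ 2) * (1 - k ^ 2 * z ^ 2))

/-- Complete elliptic integral of the second kind. -/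
noncomputable def Ec (k : ℝ) : ℝ :=
  ∫ z in (0:ℝ)..1, Real.sqrt (1 - k ^ 2 * z ^ 2) / Real.sqrt (1 - z ^ 2)

lemma base_int (C : ℝ) :
    IntervalIntegrable (fun z => C * (1 - z) ^ (-(1/2) : ℝ)) volume 0 1 := by
  have h := intervalIntegral.intervalIntegrable_rpow' (a := 0) (b := 1)
      (r := -(1/2)) (by norm_num)
  have h2 := (h.comp_sub_left 1).symm
  simpa using h2.const_mul C

lemma integrable_of_sqrt_bound {g : ℝ → ℝ} {C : ℝ} (hg : Measurable g)
    (hb : ∀ z ∈ Set.Ioo (0:ℝ) 1, |g z| ≤ C / Real.sqrt (1 - z)) :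
    IntervalIntegrable g volume 0 1 := by
  have hne : ∀ᵐ z : ℝ, z ∉ ({1} : Set ℝ) := measure_eq_zero_iff_ae_notMem.mp (by simp)
  refine (base_int C).mono_fun hg.aestronglyMeasurable ?_
  rw [Filter.EventuallyLE, ae_restrict_iff' measurableSet_uIoc]
  filter_upwards [hne] with z hz1 hz
  rw [uIoc_of_le (zero_le_one)] at hz
  have hzoo : z ∈ Set.Ioo (0:ℝ) 1 := ⟨hz.1, lt_of_le_of_ne hz.2 (by simpa using hz1)⟩
  have h1z : (0:ℝ) < 1 - z := by linarith [hzoo.2]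
  calc |g z| ≤ C / Real.sqrt (1 - z) := hb z hzoo
    _ = C * (1 - z) ^ (-(1/2) : ℝ) := by
        rw [Real.rpow_neg h1z.le, div_eq_mul_inv, Real.sqrt_eq_rpow]
    _ ≤ |C * (1 - z) ^ (-(1/2) : ℝ)| := le_abs_self _

lemma hasDerivAt_Kint {z x : ℝ} (h1 : 0 < 1 - z^2) (h2 : 0 < 1 - x^2*z^2) :
    HasDerivAt (fun x : ℝ => 1 / Real.sqrt ((1 - z^2) * (1 - x^2*z^2)))
      (x * z^2 * (1-z^2) / (((1-z^2)*(1-x^2*z^2)) * Real.sqrt ((1-z^2)*(1-x^2*z^2)))) x := by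
  have hgd : HasDerivAt (fun x : ℝ => (1-z^2)*(1-x^2*z^2)) ((1-z^2)*(-(2*x*z^2))) x := by
    have h : HasDerivAt (fun x : ℝ => 1-x^2*z^2) (-(2*x*z^2)) x := by
      have := ((hasDerivAt_pow 2 x).mul_const (z^2)).const_sub 1
      simpa [mul_comm, mul_assoc] using this
    exact h.const_mul _
  have hgpos : 0 < (1-z^2)*(1-x^2*z^2) := mul_pos h1 h2
  have hspos : 0 < Real.sqrt ((1-z^2)*(1-x^2*z^2)) := Real.sqrt_pos.2 hgpos
  have hs := hgd.sqrt hgpos.ne'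
  have h := hs.inv hspos.ne'
  have hsq : Real.sqrt ((1-z^2)*(1-x^2*z^2)) ^ 2 = (1-z^2)*(1-x^2*z^2) :=
    Real.sq_sqrt hgpos.le
  simp only [one_div]
  refine h.congr_deriv (Eq.symm ?_)
  set s := Real.sqrt ((1-z^2)*(1-x^2*z^2)) with hsdef
  rw [← hsq]
  field_simp

lemma hasDerivAt_Eint {z x : ℝ} (h1 : 0 < 1 - z^2) (h2 : 0 < 1 - x^2*z^2) :
    HasDerivAt (fun x : ℝ => Real.sqrt (1 - x^2*z^2) / Real.sqrt (1 - z^2))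
      (-(x * z^2) / (Real.sqrt (1-x^2*z^2) * Real.sqrt (1-z^2))) x := by
  have h : HasDerivAt (fun x : ℝ => 1-x^2*z^2) (-(2*x*z^2)) x := by
    have := ((hasDerivAt_pow 2 x).mul_const (z^2)).const_sub 1
    simpa [mul_comm, mul_assoc] using this
  have htpos : 0 < Real.sqrt (1-x^2*z^2) := Real.sqrt_pos.2 h2
  have hs := (h.sqrt h2.ne').div_const (Real.sqrt (1-z^2))
  refine hs.congr_deriv (Eq.symm ?_)
  have hspos : 0 < Real.sqrt (1-z^2) := Real.sqrt_pos.2 h1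
  field_simp

lemma hasDerivAt_aux {k z : ℝ} (h1 : 0 < 1 - z^2) (h2 : 0 < 1 - k^2*z^2) :
    HasDerivAt (fun z : ℝ => z * Real.sqrt (1-z^2) / Real.sqrt (1-k^2*z^2))
      ((1 - 2*z^2 + k^2*z^4) /
        (Real.sqrt (1-z^2) * ((1-k^2*z^2) * Real.sqrt (1-k^2*z^2)))) z := by
  have hu : HasDerivAt (fun z : ℝ => 1-z^2) (-(2*z)) z := by
    simpa using (hasDerivAt_pow 2 z).const_sub 1
  have hv : HasDerivAt (fun z : ℝ => 1-k^2*z^2) (-(k^2*(2*z))) z := by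
    simpa [mul_comm, mul_assoc] using ((hasDerivAt_pow 2 z).const_mul (k^2)).const_sub 1
  have hspos : 0 < Real.sqrt (1-z^2) := Real.sqrt_pos.2 h1
  have htpos : 0 < Real.sqrt (1-k^2*z^2) := Real.sqrt_pos.2 h2
  have hs2 : Real.sqrt (1-z^2) ^ 2 = 1-z^2 := Real.sq_sqrt h1.le
  have ht2 : Real.sqrt (1-k^2*z^2) ^ 2 = 1-k^2*z^2 := Real.sq_sqrt h2.le
  have hprod := (hasDerivAt_id z).mul (hu.sqrt h1.ne')
  have h := hprod.div (hv.sqrt h2.ne') htpos.ne'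
  refine h.congr_deriv (Eq.symm ?_)
  set s := Real.sqrt (1-z^2)
  set t := Real.sqrt (1-k^2*z^2)
  rw [← ht2]
  simp only [id, Pi.mul_apply]
  field_simp
  linear_combination (-t^2 - z^2*k^2) * hs2 + (2*z^2 - 1) * ht2

lemma one_sub_kz_pos {k z : ℝ} (hk2 : 0 < 1 - k^2) (hz0 : 0 ≤ z) (hz1 : z ≤ 1) :
    0 < 1 - k^2*z^2 := by
  have hz2 : z^2 ≤ 1 := by nlinarith
  nlinarith [mul_le_mul_of_nonneg_left hz2 (sq_nonneg k)]

lemma integrable_faux {k : ℝ} (hk2 : 0 < 1 - k^2) :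
    IntervalIntegrable (fun z => (1 - 2*z^2 + k^2*z^4) /
      (Real.sqrt (1-z^2) * ((1-k^2*z^2) * Real.sqrt (1-k^2*z^2)))) volume 0 1 := by
  apply integrable_of_sqrt_bound (C := 4/((1-k^2) * Real.sqrt (1-k^2))) (by fun_prop)
  intro z hz
  have h1 : 0 < 1 - z^2 := by nlinarith [hz.1, hz.2]
  have h1z : 0 < 1 - z := by linarith [hz.2]
  have h2 : 0 < 1 - k^2*z^2 := one_sub_kz_pos hk2 hz.1.le hz.2.le
  have hsk : 0 < Real.sqrt (1-k^2) := Real.sqrt_pos.2 hk2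
  have hsz : 0 < Real.sqrt (1-z) := Real.sqrt_pos.2 h1z
  have hbd : Real.sqrt (1-z) * ((1-k^2) * Real.sqrt (1-k^2)) ≤
      Real.sqrt (1-z^2) * ((1-k^2*z^2) * Real.sqrt (1-k^2*z^2)) := by
    have e1 : Real.sqrt (1-z) ≤ Real.sqrt (1-z^2) :=
      Real.sqrt_le_sqrt (by nlinarith [hz.1, hz.2])
    have e2 : (1-k^2) ≤ (1-k^2*z^2) := by nlinarith [sq_nonneg k, hz.1, hz.2]
    have e3 : Real.sqrt (1-k^2) ≤ Real.sqrt (1-k^2*z^2) :=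
      Real.sqrt_le_sqrt (by nlinarith [sq_nonneg k, hz.1, hz.2])
    have := mul_le_mul e2 e3 hsk.le h2.le
    exact mul_le_mul e1 this (by positivity) (Real.sqrt_nonneg _)
  calc |(1 - 2*z^2 + k^2*z^4) / (Real.sqrt (1-z^2) * ((1-k^2*z^2) * Real.sqrt (1-k^2*z^2)))|
      = |1 - 2*z^2 + k^2*z^4| /
        (Real.sqrt (1-z^2) * ((1-k^2*z^2) * Real.sqrt (1-k^2*z^2))) := by
        rw [abs_div, abs_of_pos (mul_pos (Real.sqrt_pos.2 h1) (mul_pos h2 (Real.sqrt_pos.2 h2)))]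
    _ ≤ 4 / (Real.sqrt (1-z) * ((1-k^2) * Real.sqrt (1-k^2))) := by
        apply div_le_div₀ (by norm_num)
          (abs_le.2 ⟨by nlinarith [sq_nonneg k, hz.1, hz.2], by nlinarith [sq_nonneg k, sq_nonneg (k*z^2), hz.1, hz.2]⟩)
          (mul_pos hsz (mul_pos hk2 hsk)) hbd
    _ = 4/((1-k^2) * Real.sqrt (1-k^2)) / Real.sqrt (1-z) := by
        rw [div_div, mul_comm]

lemma integral_faux {k : ℝ} (hk2 : 0 < 1 - k^2) :
    ∫ z in (0:ℝ)..1, (1 - 2*z^2 + k^2*z^4) /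
      (Real.sqrt (1-z^2) * ((1-k^2*z^2) * Real.sqrt (1-k^2*z^2))) = 0 := by
  have hc : ContinuousOn (fun z : ℝ => z * Real.sqrt (1-z^2) / Real.sqrt (1-k^2*z^2))
      (Set.Icc 0 1) := by
    apply ContinuousOn.div
    · exact (Continuous.continuousOn (by fun_prop))
    · exact (Continuous.continuousOn (by fun_prop))
    · intro z hz
      exact ne_of_gt (Real.sqrt_pos.2 (one_sub_kz_pos hk2 hz.1 hz.2))
  have hderiv : ∀ z ∈ Set.Ioo (0:ℝ) 1,
      HasDerivWithinAt (fun z : ℝ => z * Real.sqrt (1-z^2) / Real.sqrt (1-k^2*z^2))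
        ((1 - 2*z^2 + k^2*z^4) /
          (Real.sqrt (1-z^2) * ((1-k^2*z^2) * Real.sqrt (1-k^2*z^2)))) (Set.Ioi z) z := by
    intro z hz
    have h1 : 0 < 1 - z^2 := by nlinarith [hz.1, hz.2]
    exact (hasDerivAt_aux h1 (one_sub_kz_pos hk2 hz.1.le hz.2.le)).hasDerivWithinAt
  rw [intervalIntegral.integral_eq_sub_of_hasDeriv_right_of_le zero_le_one hc hderiv
    (integrable_faux hk2)]
  norm_num

lemma Kident {k z : ℝ} (hk0 : k ≠ 0) (hk2 : 0 < 1 - k^2) (h1 : 0 < 1 - z^2)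
    (h2 : 0 < 1 - k^2*z^2) :
    k * z^2 * (1-z^2) / (((1-z^2)*(1-k^2*z^2)) * Real.sqrt ((1-z^2)*(1-k^2*z^2)))
      = (-(1/k)) * (1 / Real.sqrt ((1-z^2)*(1-k^2*z^2)))
        + ((1/(k*(1-k^2))) * (Real.sqrt (1-k^2*z^2) / Real.sqrt (1-z^2))
        + (-(k/(1-k^2))) * ((1 - 2*z^2 + k^2*z^4) /
            (Real.sqrt (1-z^2) * ((1-k^2*z^2) * Real.sqrt (1-k^2*z^2))))) := by
  have hspos : 0 < Real.sqrt (1-z^2) := Real.sqrt_pos.2 h1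
  have htpos : 0 < Real.sqrt (1-k^2*z^2) := Real.sqrt_pos.2 h2
  have hs2 : Real.sqrt (1-z^2) ^ 2 = 1-z^2 := Real.sq_sqrt h1.le
  have ht2 : Real.sqrt (1-k^2*z^2) ^ 2 = 1-k^2*z^2 := Real.sq_sqrt h2.le
  rw [Real.sqrt_mul h1.le]
  set s := Real.sqrt (1-z^2)
  set t := Real.sqrt (1-k^2*z^2)
  rw [← hs2, ← ht2]
  field_simp
  ring_nf
  linear_combination (-t^2 + k^2*z^2 - k^2) * ht2

lemma Eident {k z : ℝ} (hk0 : k ≠ 0) (h1 : 0 < 1 - z^2) (h2 : 0 < 1 - k^2*z^2) :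
    -(k*z^2) / (Real.sqrt (1-k^2*z^2) * Real.sqrt (1-z^2))
      = (1/k) * (Real.sqrt (1-k^2*z^2) / Real.sqrt (1-z^2))
        + (-(1/k)) * (1 / Real.sqrt ((1-z^2)*(1-k^2*z^2))) := by
  have hspos : 0 < Real.sqrt (1-z^2) := Real.sqrt_pos.2 h1
  have htpos : 0 < Real.sqrt (1-k^2*z^2) := Real.sqrt_pos.2 h2
  have hs2 : Real.sqrt (1-z^2) ^ 2 = 1-z^2 := Real.sq_sqrt h1.le
  have ht2 : Real.sqrt (1-k^2*z^2) ^ 2 = 1-k^2*z^2 := Real.sq_sqrt h2.le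
  rw [Real.sqrt_mul h1.le]
  set s := Real.sqrt (1-z^2)
  set t := Real.sqrt (1-k^2*z^2)
  field_simp
  ring_nf
  linear_combination (-1) * ht2

set_option maxHeartbeats 2000000 in
/-- derivatives of the complete elliptic integrals `K` and `E`. -/
theorem deriv_K_and_E (k : ℝ) (hk : k ∈ Set.Ioo (-1 : ℝ) 1) (hk0 : k ≠ 0) :
    HasDerivAt Kc (-(Kc k) / k + Ec k / (k * (1 - k ^ 2))) k ∧
    HasDerivAt Ec ((Ec k - Kc k) / k) k := by
  obtain ⟨hkl, hkru⟩ := hk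
  have hk1 : |k| < 1 := abs_lt.2 ⟨hkl, hkru⟩
  have hk2 : 0 < 1 - k^2 := by nlinarith [sq_abs k, abs_nonneg k]
  set r : ℝ := (|k|+1)/2 with hrdef
  have hkr : |k| < r := by rw [hrdef]; linarith
  have hr1 : r < 1 := by rw [hrdef]; linarith
  have hr0 : (0:ℝ) ≤ r := le_trans (abs_nonneg k) hkr.le
  have hr2 : 0 < 1 - r^2 := by nlinarith
  have hε : 0 < r - |k| := by linarith
  have hsr : 0 < Real.sqrt (1-r^2) := Real.sqrt_pos.2 hr2
  have hsk : 0 < Real.sqrt (1-k^2) := Real.sqrt_pos.2 hk2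
  have hball : ∀ x ∈ Metric.ball k (r - |k|), |x| < r := by
    intro x hx
    rw [Metric.mem_ball, Real.dist_eq] at hx
    have h := abs_sub_abs_le_abs_sub x k
    linarith
  have hne : ∀ᵐ z : ℝ, z ∉ ({1} : Set ℝ) := measure_eq_zero_iff_ae_notMem.mp (by simp)
  -- integrability of the K integrand
  have hKint : IntervalIntegrable
      (fun z => 1 / Real.sqrt ((1 - z^2) * (1 - k^2*z^2))) volume 0 1 := by
    apply integrable_of_sqrt_bound (C := 1/Real.sqrt (1-k^2)) (by fun_prop)
    intro z hz
    have h1 : 0 < 1 - z^2 := by nlinarith [hz.1, hz.2]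
    have h1z : 0 < 1 - z := by linarith [hz.2]
    have h2 : 0 < 1 - k^2*z^2 := one_sub_kz_pos hk2 hz.1.le hz.2.le
    have hsz : 0 < Real.sqrt (1-z) := Real.sqrt_pos.2 h1z
    have hz2 : z^2 ≤ 1 := by nlinarith [hz.1, hz.2]
    have hA : Real.sqrt (1-z) * Real.sqrt (1-k^2) ≤ Real.sqrt ((1-z^2)*(1-k^2*z^2)) := by
      rw [← Real.sqrt_mul h1z.le]
      apply Real.sqrt_le_sqrt
      have e1 : 1 - z ≤ 1 - z^2 := by nlinarith [hz.1, hz.2]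
      have e2 : 1-k^2 ≤ 1-k^2*z^2 := by
        nlinarith [mul_le_mul_of_nonneg_left hz2 (sq_nonneg k)]
      exact mul_le_mul e1 e2 hk2.le h1.le
    calc |1 / Real.sqrt ((1 - z^2) * (1 - k^2*z^2))|
        = 1 / Real.sqrt ((1 - z^2) * (1 - k^2*z^2)) :=
          abs_of_pos (by positivity)
      _ ≤ 1/(Real.sqrt (1-z) * Real.sqrt (1-k^2)) :=
          one_div_le_one_div_of_le (mul_pos hsz hsk) hA
      _ = (1/Real.sqrt (1-k^2))/Real.sqrt (1-z) := by rw [div_div, mul_comm]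
  -- integrability of the E integrand
  have hEint : IntervalIntegrable
      (fun z => Real.sqrt (1 - k^2*z^2) / Real.sqrt (1 - z^2)) volume 0 1 := by
    apply integrable_of_sqrt_bound (C := 1) (by fun_prop)
    intro z hz
    have h1 : 0 < 1 - z^2 := by nlinarith [hz.1, hz.2]
    have h1z : 0 < 1 - z := by linarith [hz.2]
    have hsz : 0 < Real.sqrt (1-z) := Real.sqrt_pos.2 h1z
    have ht1 : Real.sqrt (1 - k^2*z^2) ≤ 1 := Real.sqrt_le_one.2 (by nlinarith [sq_nonneg k, sq_nonneg z, sq_nonneg (k*z)])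
    have hsge : Real.sqrt (1-z) ≤ Real.sqrt (1-z^2) :=
      Real.sqrt_le_sqrt (by nlinarith [hz.1, hz.2])
    calc |Real.sqrt (1 - k^2*z^2) / Real.sqrt (1 - z^2)|
        = Real.sqrt (1 - k^2*z^2) / Real.sqrt (1 - z^2) :=
          abs_of_nonneg (by positivity)
      _ ≤ 1 / Real.sqrt (1-z) := div_le_div₀ zero_le_one ht1 hsz hsge
  -- bound integrability
  have hCK : (0:ℝ) ≤ 1/((1-r^2)*Real.sqrt (1-r^2)) :=
    le_of_lt (by apply div_pos one_pos (mul_pos hr2 hsr))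
  have hCE : (0:ℝ) ≤ 1/Real.sqrt (1-r^2) := le_of_lt (by positivity)
  have hbintK : IntervalIntegrable
      (fun z => (1/((1-r^2)*Real.sqrt (1-r^2))) / Real.sqrt (1-z)) volume 0 1 := by
    apply integrable_of_sqrt_bound (C := 1/((1-r^2)*Real.sqrt (1-r^2))) (by fun_prop)
    intro z hz
    rw [abs_of_nonneg (div_nonneg hCK (Real.sqrt_nonneg _))]
  have hbintE : IntervalIntegrable
      (fun z => (1/Real.sqrt (1-r^2)) / Real.sqrt (1-z)) volume 0 1 := by
    apply integrable_of_sqrt_bound (C := 1/Real.sqrt (1-r^2)) (by fun_prop)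
    intro z hz
    rw [abs_of_nonneg (div_nonneg hCE (Real.sqrt_nonneg _))]
  -- dominated differentiation for K
  have HK := intervalIntegral.hasDerivAt_integral_of_dominated_loc_of_deriv_le
    (μ := volume) (a := (0:ℝ)) (b := 1) (x₀ := k)
    (F := fun x z => 1 / Real.sqrt ((1 - z^2) * (1 - x^2*z^2)))
    (F' := fun x z => x * z^2 * (1-z^2) /
      (((1-z^2)*(1-x^2*z^2)) * Real.sqrt ((1-z^2)*(1-x^2*z^2))))
    (bound := fun z => (1/((1-r^2)*Real.sqrt (1-r^2))) / Real.sqrt (1-z))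
    (Metric.ball_mem_nhds k hε)
    (Filter.Eventually.of_forall fun x => ((by fun_prop : Measurable fun z : ℝ =>
      1 / Real.sqrt ((1 - z^2) * (1 - x^2*z^2))).aestronglyMeasurable))
    hKint
    ((by fun_prop : Measurable fun z : ℝ => k * z^2 * (1-z^2) /
      (((1-z^2)*(1-k^2*z^2)) * Real.sqrt ((1-z^2)*(1-k^2*z^2)))).aestronglyMeasurable)
    (by
      filter_upwards [hne] with z hz1 hz x hx
      rw [uIoc_of_le zero_le_one] at hz
      have hzoo : z ∈ Set.Ioo (0:ℝ) 1 := ⟨hz.1, lt_of_le_of_ne hz.2 (by simpa using hz1)⟩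
      have h1 : 0 < 1 - z^2 := by nlinarith [hzoo.1, hzoo.2]
      have h1z : 0 < 1 - z := by linarith [hzoo.2]
      have hz2 : z^2 ≤ 1 := by nlinarith [hzoo.1, hzoo.2]
      have hxr : |x| < r := hball x hx
      have hx2 : x^2 < r^2 := by nlinarith [sq_abs x, abs_nonneg x]
      have h2x : 0 < 1 - x^2*z^2 := by
        nlinarith [mul_le_mul_of_nonneg_left hz2 (sq_nonneg x)]
      have hsz : 0 < Real.sqrt (1-z) := Real.sqrt_pos.2 h1z
      have e2x : 1-r^2 ≤ 1-x^2*z^2 := by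
        nlinarith [mul_le_mul_of_nonneg_left hz2 (sq_nonneg x)]
      have hgx : 0 < (1-z^2)*(1-x^2*z^2) := mul_pos h1 h2x
      have hsgx : 0 < Real.sqrt ((1-z^2)*(1-x^2*z^2)) := Real.sqrt_pos.2 hgx
      have hnum : |x * z^2 * (1-z^2)| ≤ 1-z^2 := by
        rw [abs_mul, abs_mul, abs_of_nonneg (sq_nonneg z), abs_of_nonneg h1.le]
        have h3 : |x| * z^2 ≤ 1 := by nlinarith [abs_nonneg x]
        nlinarith [abs_nonneg x, h1.le]
      have hD : ((1-z^2)*(1-r^2)) * (Real.sqrt (1-z) * Real.sqrt (1-r^2)) ≤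
          ((1-z^2)*(1-x^2*z^2)) * Real.sqrt ((1-z^2)*(1-x^2*z^2)) := by
        apply mul_le_mul
        · exact mul_le_mul_of_nonneg_left e2x h1.le
        · rw [← Real.sqrt_mul h1z.le]
          apply Real.sqrt_le_sqrt
          apply mul_le_mul (by nlinarith [hzoo.1, hzoo.2]) e2x hr2.le h1.le
        · positivity
        · exact le_of_lt (mul_pos h1 h2x)
      rw [Real.norm_eq_abs]
      calc |x * z^2 * (1-z^2) /
            (((1-z^2)*(1-x^2*z^2)) * Real.sqrt ((1-z^2)*(1-x^2*z^2)))|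
          = |x * z^2 * (1-z^2)| /
            (((1-z^2)*(1-x^2*z^2)) * Real.sqrt ((1-z^2)*(1-x^2*z^2))) := by
            rw [abs_div, abs_of_pos (mul_pos hgx hsgx)]
        _ ≤ (1-z^2) / (((1-z^2)*(1-r^2)) * (Real.sqrt (1-z) * Real.sqrt (1-r^2))) :=
            div_le_div₀ h1.le hnum
              (mul_pos (mul_pos h1 hr2) (mul_pos hsz hsr)) hD
        _ = (1/((1-r^2)*Real.sqrt (1-r^2))) / Real.sqrt (1-z) := by
            field_simp)
    hbintK
    (by
      filter_upwards [hne] with z hz1 hz x hx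
      rw [uIoc_of_le zero_le_one] at hz
      have hzoo : z ∈ Set.Ioo (0:ℝ) 1 := ⟨hz.1, lt_of_le_of_ne hz.2 (by simpa using hz1)⟩
      have h1 : 0 < 1 - z^2 := by nlinarith [hzoo.1, hzoo.2]
      have hz2 : z^2 ≤ 1 := by nlinarith [hzoo.1, hzoo.2]
      have hxr : |x| < r := hball x hx
      have hx2 : x^2 < r^2 := by nlinarith [sq_abs x, abs_nonneg x]
      have h2x : 0 < 1 - x^2*z^2 := by
        nlinarith [mul_le_mul_of_nonneg_left hz2 (sq_nonneg x)]
      exact hasDerivAt_Kint h1 h2x)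
  -- dominated differentiation for E
  have HE := intervalIntegral.hasDerivAt_integral_of_dominated_loc_of_deriv_le
    (μ := volume) (a := (0:ℝ)) (b := 1) (x₀ := k)
    (F := fun x z => Real.sqrt (1 - x^2*z^2) / Real.sqrt (1 - z^2))
    (F' := fun x z => -(x * z^2) / (Real.sqrt (1-x^2*z^2) * Real.sqrt (1-z^2)))
    (bound := fun z => (1/Real.sqrt (1-r^2)) / Real.sqrt (1-z))
    (Metric.ball_mem_nhds k hε)
    (Filter.Eventually.of_forall fun x => ((by fun_prop : Measurable fun z : ℝ =>
      Real.sqrt (1 - x^2*z^2) / Real.sqrt (1 - z^2)).aestronglyMeasurable))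
    hEint
    ((by fun_prop : Measurable fun z : ℝ =>
      -(k * z^2) / (Real.sqrt (1-k^2*z^2) * Real.sqrt (1-z^2))).aestronglyMeasurable)
    (by
      filter_upwards [hne] with z hz1 hz x hx
      rw [uIoc_of_le zero_le_one] at hz
      have hzoo : z ∈ Set.Ioo (0:ℝ) 1 := ⟨hz.1, lt_of_le_of_ne hz.2 (by simpa using hz1)⟩
      have h1 : 0 < 1 - z^2 := by nlinarith [hzoo.1, hzoo.2]
      have h1z : 0 < 1 - z := by linarith [hzoo.2]
      have hz2 : z^2 ≤ 1 := by nlinarith [hzoo.1, hzoo.2]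
      have hxr : |x| < r := hball x hx
      have hx2 : x^2 < r^2 := by nlinarith [sq_abs x, abs_nonneg x]
      have h2x : 0 < 1 - x^2*z^2 := by
        nlinarith [mul_le_mul_of_nonneg_left hz2 (sq_nonneg x)]
      have hsz : 0 < Real.sqrt (1-z) := Real.sqrt_pos.2 h1z
      have e2x : 1-r^2 ≤ 1-x^2*z^2 := by
        nlinarith [mul_le_mul_of_nonneg_left hz2 (sq_nonneg x)]
      have hnum : |(-(x * z^2))| ≤ 1 := by
        rw [abs_neg, abs_mul, abs_of_nonneg (sq_nonneg z)]
        nlinarith [abs_nonneg x]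
      have hD : Real.sqrt (1-r^2) * Real.sqrt (1-z) ≤
          Real.sqrt (1-x^2*z^2) * Real.sqrt (1-z^2) := by
        apply mul_le_mul (Real.sqrt_le_sqrt e2x)
          (Real.sqrt_le_sqrt (by nlinarith [hzoo.1, hzoo.2]))
          (Real.sqrt_nonneg _) (Real.sqrt_nonneg _)
      rw [Real.norm_eq_abs]
      calc |(-(x * z^2)) / (Real.sqrt (1-x^2*z^2) * Real.sqrt (1-z^2))|
          = |(-(x * z^2))| / (Real.sqrt (1-x^2*z^2) * Real.sqrt (1-z^2)) := by
            rw [abs_div, abs_of_pos (mul_pos (Real.sqrt_pos.2 h2x) (Real.sqrt_pos.2 h1))]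
        _ ≤ 1 / (Real.sqrt (1-r^2) * Real.sqrt (1-z)) :=
            div_le_div₀ zero_le_one hnum (mul_pos hsr hsz) hD
        _ = (1/Real.sqrt (1-r^2)) / Real.sqrt (1-z) := by rw [div_div]
    )
    hbintE
    (by
      filter_upwards [hne] with z hz1 hz x hx
      rw [uIoc_of_le zero_le_one] at hz
      have hzoo : z ∈ Set.Ioo (0:ℝ) 1 := ⟨hz.1, lt_of_le_of_ne hz.2 (by simpa using hz1)⟩
      have h1 : 0 < 1 - z^2 := by nlinarith [hzoo.1, hzoo.2]
      have hz2 : z^2 ≤ 1 := by nlinarith [hzoo.1, hzoo.2]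
      have hxr : |x| < r := hball x hx
      have hx2 : x^2 < r^2 := by nlinarith [sq_abs x, abs_nonneg x]
      have h2x : 0 < 1 - x^2*z^2 := by
        nlinarith [mul_le_mul_of_nonneg_left hz2 (sq_nonneg x)]
      exact hasDerivAt_Eint h1 h2x)
  -- values of the derivative integrals
  have hKcdef : Kc k = ∫ z in (0:ℝ)..1, 1 / Real.sqrt ((1 - z^2) * (1 - k^2*z^2)) := rfl
  have hEcdef : Ec k = ∫ z in (0:ℝ)..1, Real.sqrt (1 - k^2*z^2) / Real.sqrt (1 - z^2) := rfl
  have hvalK : (∫ z in (0:ℝ)..1, k * z^2 * (1-z^2) /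
      (((1-z^2)*(1-k^2*z^2)) * Real.sqrt ((1-z^2)*(1-k^2*z^2))))
      = -(Kc k) / k + Ec k / (k * (1 - k ^ 2)) := by
    have hcong : (∫ z in (0:ℝ)..1, k * z^2 * (1-z^2) /
        (((1-z^2)*(1-k^2*z^2)) * Real.sqrt ((1-z^2)*(1-k^2*z^2))))
        = ∫ z in (0:ℝ)..1,
          ((-(1/k)) * (1 / Real.sqrt ((1-z^2)*(1-k^2*z^2)))
          + ((1/(k*(1-k^2))) * (Real.sqrt (1-k^2*z^2) / Real.sqrt (1-z^2))
          + (-(k/(1-k^2))) * ((1 - 2*z^2 + k^2*z^4) /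
              (Real.sqrt (1-z^2) * ((1-k^2*z^2) * Real.sqrt (1-k^2*z^2)))))) := by
      apply intervalIntegral.integral_congr_ae
      filter_upwards [hne] with z hz1 hz
      rw [uIoc_of_le zero_le_one] at hz
      have hzoo : z ∈ Set.Ioo (0:ℝ) 1 := ⟨hz.1, lt_of_le_of_ne hz.2 (by simpa using hz1)⟩
      have h1 : 0 < 1 - z^2 := by nlinarith [hzoo.1, hzoo.2]
      exact Kident hk0 hk2 h1 (one_sub_kz_pos hk2 hzoo.1.le hzoo.2.le)
    rw [hcong, intervalIntegral.integral_add (hKint.const_mul _)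
        ((hEint.const_mul _).add ((integrable_faux hk2).const_mul _)),
      intervalIntegral.integral_add (hEint.const_mul _) ((integrable_faux hk2).const_mul _),
      intervalIntegral.integral_const_mul, intervalIntegral.integral_const_mul,
      intervalIntegral.integral_const_mul, integral_faux hk2, ← hKcdef, ← hEcdef]
    field_simp
    ring
  have hvalE : (∫ z in (0:ℝ)..1, -(k * z^2) / (Real.sqrt (1-k^2*z^2) * Real.sqrt (1-z^2)))
      = (Ec k - Kc k) / k := by
    have hcong : (∫ z in (0:ℝ)..1, -(k * z^2) / (Real.sqrt (1-k^2*z^2) * Real.sqrt (1-z^2)))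
        = ∫ z in (0:ℝ)..1,
          ((1/k) * (Real.sqrt (1-k^2*z^2) / Real.sqrt (1-z^2))
          + (-(1/k)) * (1 / Real.sqrt ((1-z^2)*(1-k^2*z^2)))) := by
      apply intervalIntegral.integral_congr_ae
      filter_upwards [hne] with z hz1 hz
      rw [uIoc_of_le zero_le_one] at hz
      have hzoo : z ∈ Set.Ioo (0:ℝ) 1 := ⟨hz.1, lt_of_le_of_ne hz.2 (by simpa using hz1)⟩
      have h1 : 0 < 1 - z^2 := by nlinarith [hzoo.1, hzoo.2]
      exact Eident hk0 h1 (one_sub_kz_pos hk2 hzoo.1.le hzoo.2.le)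
    rw [hcong, intervalIntegral.integral_add (hEint.const_mul _) (hKint.const_mul _),
      intervalIntegral.integral_const_mul, intervalIntegral.integral_const_mul,
      ← hKcdef, ← hEcdef]
    field_simp
    ring
  constructor
  · have H := HK.2
    rw [hvalK] at H
    exact H
  · have H := HE.2
    rw [hvalE] at H
    exact H
end

section
/- Fix μ ∈ [0,1). For every k ∈ (−1,1) with k² ≠ μ, the function k ↦ Π(μ,k) is differentiable at k and ∂Π(μ,k)/∂k = k·E(k)/((1−k²)(k²−μ)) + k·Π(μ,k)/(μ−k²). -/
/-- Complete elliptic integral of the third kind. -/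
noncomputable def Pic (μ k : ℝ) : ℝ :=
  ∫ z in (0:ℝ)..1, 1 / ((1 - μ * z ^ 2) * Real.sqrt ((1 - z ^ 2) * (1 - k ^ 2 * z ^ 2)))

open MeasureTheory intervalIntegral Set Metric

section helpers

lemma II_one_div_sqrt : IntervalIntegrable (fun z : ℝ => 1 / Real.sqrt (1 - z))
    MeasureTheory.volume 0 1 := by
  have h : IntervalIntegrable (fun x : ℝ => x ^ (-(1/2) : ℝ)) MeasureTheory.volume 0 1 :=
    intervalIntegral.intervalIntegrable_rpow' (by norm_num)
  have h2 := h.comp_sub_left 1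
  simp only [sub_zero, sub_self] at h2
  have h3 : IntervalIntegrable (fun x : ℝ => (1 - x) ^ (-(1/2) : ℝ))
      MeasureTheory.volume 0 1 := h2.symm
  apply h3.congr
  have hmem : ∀ᵐ z ∂(MeasureTheory.volume.restrict (Set.uIoc (0:ℝ) 1)), z ∈ Set.uIoc (0:ℝ) 1 :=
    MeasureTheory.ae_restrict_mem measurableSet_uIoc
  intro z hz
  beta_reduce
  rw [Set.uIoc_of_le (by norm_num : (0:ℝ) ≤ 1)] at hz
  have h1z : (0:ℝ) ≤ 1 - z := by linarith [hz.2]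
  rw [Real.rpow_neg h1z, Real.sqrt_eq_rpow, one_div]
  norm_num

lemma ae_Ioo : ∀ᵐ z ∂(MeasureTheory.volume.restrict (Set.uIoc (0:ℝ) 1)),
    z ∈ Set.Ioo (0:ℝ) 1 := by
  have hmem : ∀ᵐ z ∂(MeasureTheory.volume.restrict (Set.uIoc (0:ℝ) 1)), z ∈ Set.uIoc (0:ℝ) 1 :=
    MeasureTheory.ae_restrict_mem measurableSet_uIoc
  have hne : ∀ᵐ z ∂(MeasureTheory.volume.restrict (Set.uIoc (0:ℝ) 1)), z ≠ 1 := by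
    refine MeasureTheory.ae_restrict_of_ae ?_
    rw [MeasureTheory.ae_iff]
    have : {a : ℝ | ¬ a ≠ 1} = {1} := by ext a; simp
    rw [this]
    exact Real.volume_singleton
  filter_upwards [hmem, hne] with z hz hz1
  rw [Set.uIoc_of_le (by norm_num : (0:ℝ) ≤ 1)] at hz
  exact ⟨hz.1, lt_of_le_of_ne hz.2 hz1⟩

lemma ae_ne_one : ∀ᵐ z ∂(MeasureTheory.volume : Measure ℝ), z ≠ 1 := by
  rw [MeasureTheory.ae_iff]
  have : {a : ℝ | ¬ a ≠ 1} = {1} := by ext a; simp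
  rw [this]
  exact Real.volume_singleton

lemma II_of_bound {g : ℝ → ℝ} {C : ℝ} (hC : 0 ≤ C)
    (hm : AEStronglyMeasurable g (MeasureTheory.volume.restrict (Set.uIoc (0:ℝ) 1)))
    (hb : ∀ z ∈ Set.Ioo (0:ℝ) 1, |g z| ≤ C / Real.sqrt (1 - z)) :
    IntervalIntegrable g MeasureTheory.volume 0 1 := by
  have hint : IntervalIntegrable (fun z : ℝ => C / Real.sqrt (1 - z))
      MeasureTheory.volume 0 1 := by
    have := II_one_div_sqrt.const_mul C
    simpa [mul_one_div, div_eq_mul_inv] using this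
  refine hint.mono_fun hm ?_
  filter_upwards [ae_Ioo] with z hz
  have h := hb z hz
  have h0 : 0 ≤ C / Real.sqrt (1 - z) := div_nonneg hC (Real.sqrt_nonneg _)
  rw [Real.norm_eq_abs, Real.norm_eq_abs, abs_of_nonneg h0]
  exact h

variable {k z : ℝ}

lemma fact_z2 (hz : z ∈ Set.Ioo (0:ℝ) 1) : 0 < 1 - z ^ 2 := by
  nlinarith [hz.1, hz.2]

lemma fact_kz (hk2 : k ^ 2 < 1) (hz : z ∈ Set.Ioo (0:ℝ) 1) : 0 < 1 - k ^ 2 * z ^ 2 := by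
  nlinarith [sq_nonneg k, sq_nonneg z, hz.1, hz.2]

lemma fact_muz {μ : ℝ} (hμ0 : 0 ≤ μ) (hμ1 : μ < 1) (hz : z ∈ Set.Ioo (0:ℝ) 1) :
    0 < 1 - μ * z ^ 2 := by
  nlinarith [sq_nonneg z, hz.1, hz.2]

lemma fact_z1 (hz : z ∈ Set.Ioo (0:ℝ) 1) : 0 < 1 - z := by linarith [hz.2]

lemma fact_a1 (hz : z ∈ Set.Ioo (0:ℝ) 1) :
    Real.sqrt (1 - z) ≤ Real.sqrt (1 - z ^ 2) :=
  Real.sqrt_le_sqrt (by nlinarith [hz.1, hz.2])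

lemma fact_b1 (hk2 : k ^ 2 < 1) (hz : z ∈ Set.Ioo (0:ℝ) 1) :
    Real.sqrt (1 - k ^ 2) ≤ Real.sqrt (1 - k ^ 2 * z ^ 2) :=
  Real.sqrt_le_sqrt (by nlinarith [sq_nonneg k, fact_z2 hz])

lemma II_e (hk2 : k ^ 2 < 1) :
    IntervalIntegrable (fun z : ℝ => Real.sqrt (1 - k ^ 2 * z ^ 2) / Real.sqrt (1 - z ^ 2))
      MeasureTheory.volume 0 1 := by
  refine II_of_bound (C := 1) zero_le_one ?_ ?_
  · have hnum : Continuous fun z : ℝ => Real.sqrt (1 - k ^ 2 * z ^ 2) := by fun_prop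
    have hden : Continuous fun z : ℝ => Real.sqrt (1 - z ^ 2) := by fun_prop
    exact (hnum.measurable.div hden.measurable).aestronglyMeasurable
  · intro z hz
    rw [abs_of_nonneg (div_nonneg (Real.sqrt_nonneg _) (Real.sqrt_nonneg _))]
    exact div_le_div₀ zero_le_one
      (Real.sqrt_le_one.mpr (by nlinarith [sq_nonneg k, sq_nonneg z]))
      (Real.sqrt_pos.mpr (fact_z1 hz)) (fact_a1 hz)

lemma II_j (hk2 : k ^ 2 < 1) :
    IntervalIntegrable
      (fun z : ℝ => 1 / (Real.sqrt (1 - z ^ 2) * Real.sqrt (1 - k ^ 2 * z ^ 2) ^ 3))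
      MeasureTheory.volume 0 1 := by
  have hk1 : (0:ℝ) < 1 - k ^ 2 := by nlinarith
  refine II_of_bound (C := 1 / Real.sqrt (1 - k ^ 2) ^ 3) (by positivity) ?_ ?_
  · have hden : Continuous fun z : ℝ =>
        Real.sqrt (1 - z ^ 2) * Real.sqrt (1 - k ^ 2 * z ^ 2) ^ 3 := by fun_prop
    exact (measurable_const.div hden.measurable).aestronglyMeasurable
  · intro z hz
    have h1z := fact_z1 hz
    have hpos : 0 < Real.sqrt (1 - z) * Real.sqrt (1 - k ^ 2) ^ 3 :=
      mul_pos (Real.sqrt_pos.mpr h1z) (pow_pos (Real.sqrt_pos.mpr hk1) 3)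
    have key : Real.sqrt (1 - z) * Real.sqrt (1 - k ^ 2) ^ 3
        ≤ Real.sqrt (1 - z ^ 2) * Real.sqrt (1 - k ^ 2 * z ^ 2) ^ 3 :=
      mul_le_mul (fact_a1 hz) (pow_le_pow_left₀ (Real.sqrt_nonneg _) (fact_b1 hk2 hz) 3)
        (by positivity) (Real.sqrt_nonneg _)
    rw [abs_of_nonneg (by positivity)]
    calc 1 / (Real.sqrt (1 - z ^ 2) * Real.sqrt (1 - k ^ 2 * z ^ 2) ^ 3)
        ≤ 1 / (Real.sqrt (1 - z) * Real.sqrt (1 - k ^ 2) ^ 3) :=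
          one_div_le_one_div_of_le hpos key
      _ = 1 / Real.sqrt (1 - k ^ 2) ^ 3 / Real.sqrt (1 - z) := by ring

lemma II_p {μ : ℝ} (hμ0 : 0 ≤ μ) (hμ1 : μ < 1) (hk2 : k ^ 2 < 1) :
    IntervalIntegrable
      (fun z : ℝ => 1 / ((1 - μ * z ^ 2) * Real.sqrt ((1 - z ^ 2) * (1 - k ^ 2 * z ^ 2))))
      MeasureTheory.volume 0 1 := by
  have hk1 : (0:ℝ) < 1 - k ^ 2 := by nlinarith
  have h1μ : (0:ℝ) < 1 - μ := by linarith
  refine II_of_bound (C := 1 / ((1 - μ) * Real.sqrt (1 - k ^ 2)))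
    (le_of_lt (by positivity)) ?_ ?_
  · have hden : Continuous fun z : ℝ =>
        (1 - μ * z ^ 2) * Real.sqrt ((1 - z ^ 2) * (1 - k ^ 2 * z ^ 2)) := by fun_prop
    exact (measurable_const.div hden.measurable).aestronglyMeasurable
  · intro z hz
    have hz2 := fact_z2 hz
    have hkz := fact_kz hk2 hz
    have hμz := fact_muz hμ0 hμ1 hz
    have h1z := fact_z1 hz
    simp only [Real.sqrt_mul hz2.le]
    have hpos : 0 < (1 - μ) * Real.sqrt (1 - k ^ 2) * Real.sqrt (1 - z) := by positivity
    have t1 : (1 - μ) * Real.sqrt (1 - k ^ 2)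
        ≤ (1 - μ * z ^ 2) * Real.sqrt (1 - k ^ 2 * z ^ 2) :=
      mul_le_mul (by nlinarith [mul_nonneg hμ0 hz2.le]) (fact_b1 hk2 hz)
        (Real.sqrt_nonneg _) hμz.le
    have t2 : (1 - μ) * Real.sqrt (1 - k ^ 2) * Real.sqrt (1 - z)
        ≤ (1 - μ * z ^ 2) * Real.sqrt (1 - k ^ 2 * z ^ 2) * Real.sqrt (1 - z ^ 2) :=
      mul_le_mul t1 (fact_a1 hz) (Real.sqrt_nonneg _)
        (mul_nonneg hμz.le (Real.sqrt_nonneg _))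
    have key : (1 - μ) * Real.sqrt (1 - k ^ 2) * Real.sqrt (1 - z)
        ≤ (1 - μ * z ^ 2) * (Real.sqrt (1 - z ^ 2) * Real.sqrt (1 - k ^ 2 * z ^ 2)) :=
      le_of_le_of_eq t2 (by ring)
    rw [abs_of_nonneg (by positivity)]
    calc 1 / ((1 - μ * z ^ 2) * (Real.sqrt (1 - z ^ 2) * Real.sqrt (1 - k ^ 2 * z ^ 2)))
        ≤ 1 / ((1 - μ) * Real.sqrt (1 - k ^ 2) * Real.sqrt (1 - z)) :=
          one_div_le_one_div_of_le hpos key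
      _ = 1 / ((1 - μ) * Real.sqrt (1 - k ^ 2)) / Real.sqrt (1 - z) := by
          rw [div_div]

end helpers

/-- Auxiliary function whose derivative links the elliptic integrands. -/
noncomputable def fb (k z : ℝ) : ℝ := z * Real.sqrt (1 - z ^ 2) / Real.sqrt (1 - k ^ 2 * z ^ 2)

lemma fb_hasDerivAt {k : ℝ} (hk2 : k ^ 2 < 1) {z : ℝ} (hz : z ∈ Set.Ioo (0:ℝ) 1) :
    HasDerivAt (fb k)
      ((1 - 2 * z ^ 2 + k ^ 2 * z ^ 4) /
        (Real.sqrt (1 - z ^ 2) * Real.sqrt (1 - k ^ 2 * z ^ 2) ^ 3)) z := by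
  have hz2 := fact_z2 hz
  have hkz := fact_kz hk2 hz
  set a := Real.sqrt (1 - z ^ 2) with ha_def
  set b := Real.sqrt (1 - k ^ 2 * z ^ 2) with hb_def
  have ha : a ^ 2 = 1 - z ^ 2 := Real.sq_sqrt hz2.le
  have hb : b ^ 2 = 1 - k ^ 2 * z ^ 2 := Real.sq_sqrt hkz.le
  have ha0 : 0 < a := Real.sqrt_pos.mpr hz2
  have hb0 : 0 < b := Real.sqrt_pos.mpr hkz
  have h1 : HasDerivAt (fun z : ℝ => 1 - z ^ 2) (-(2 * z)) z := by
    simpa using ((hasDerivAt_pow 2 z).const_sub 1)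
  have h1s : HasDerivAt (fun z : ℝ => Real.sqrt (1 - z ^ 2)) (-(2 * z) / (2 * a)) z :=
    h1.sqrt hz2.ne'
  have h2 : HasDerivAt (fun z : ℝ => 1 - k ^ 2 * z ^ 2) (-(k ^ 2 * (2 * z))) z := by
    simpa [mul_comm] using (((hasDerivAt_pow 2 z).const_mul (k ^ 2)).const_sub 1)
  have h2s : HasDerivAt (fun z : ℝ => Real.sqrt (1 - k ^ 2 * z ^ 2))
      (-(k ^ 2 * (2 * z)) / (2 * b)) z := h2.sqrt hkz.ne'
  have hnum : HasDerivAt (fun z : ℝ => z * Real.sqrt (1 - z ^ 2))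
      (1 * a + z * (-(2 * z) / (2 * a))) z := (hasDerivAt_id z).mul h1s
  have hdiv := hnum.fun_div h2s hb0.ne'
  refine hdiv.congr_deriv ?_
  simp only [← ha_def, ← hb_def]
  clear_value a b
  field_simp
  linear_combination (b^2 + z^2*k^2) * ha + (1 - 2*z^2) * hb

/-- The key identity `∫ 1/(√(1-z²)·√(1-k²z²)³) = E(k)/(1-k²)`. -/
lemma J_eq {k : ℝ} (hk2 : k ^ 2 < 1)
    (hIj : IntervalIntegrable
      (fun z : ℝ => 1 / (Real.sqrt (1 - z ^ 2) * Real.sqrt (1 - k ^ 2 * z ^ 2) ^ 3))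
      MeasureTheory.volume 0 1)
    (hIe : IntervalIntegrable
      (fun z : ℝ => Real.sqrt (1 - k ^ 2 * z ^ 2) / Real.sqrt (1 - z ^ 2))
      MeasureTheory.volume 0 1) :
    (∫ z in (0:ℝ)..1, 1 / (Real.sqrt (1 - z ^ 2) * Real.sqrt (1 - k ^ 2 * z ^ 2) ^ 3))
      = Ec k / (1 - k ^ 2) := by
  have hk1 : (0:ℝ) < 1 - k ^ 2 := by nlinarith
  set f' := fun z : ℝ =>
    (1 - k ^ 2) * (1 / (Real.sqrt (1 - z ^ 2) * Real.sqrt (1 - k ^ 2 * z ^ 2) ^ 3))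
      - Real.sqrt (1 - k ^ 2 * z ^ 2) / Real.sqrt (1 - z ^ 2) with hf'_def
  have hIf' : IntervalIntegrable f' MeasureTheory.volume 0 1 :=
    (hIj.const_mul (1 - k ^ 2)).sub hIe
  have hcont : ContinuousOn (fun z => -k ^ 2 * fb k z) (Set.Icc (0:ℝ) 1) := by
    apply ContinuousOn.mul continuousOn_const
    apply ContinuousOn.div
    · fun_prop
    · fun_prop
    · intro z hz
      have hz1 : z ^ 2 ≤ 1 := by nlinarith [hz.1, hz.2]
      have hz3 : k ^ 2 * z ^ 2 ≤ k ^ 2 := by nlinarith [sq_nonneg k]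
      have : 0 < 1 - k ^ 2 * z ^ 2 := by nlinarith
      exact (Real.sqrt_pos.mpr this).ne'
  have hderiv : ∀ z ∈ Set.Ioo (0:ℝ) 1,
      HasDerivWithinAt (fun z => -k ^ 2 * fb k z) (f' z) (Set.Ioi z) z := by
    intro z hz
    have h := (fb_hasDerivAt hk2 hz).const_mul (-k ^ 2)
    have hz2 := fact_z2 hz
    have hkz := fact_kz hk2 hz
    have ha : Real.sqrt (1 - z ^ 2) ^ 2 = 1 - z ^ 2 := Real.sq_sqrt hz2.le
    have hb : Real.sqrt (1 - k ^ 2 * z ^ 2) ^ 2 = 1 - k ^ 2 * z ^ 2 := Real.sq_sqrt hkz.le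
    have ha0 : 0 < Real.sqrt (1 - z ^ 2) := Real.sqrt_pos.mpr hz2
    have hb0 : 0 < Real.sqrt (1 - k ^ 2 * z ^ 2) := Real.sqrt_pos.mpr hkz
    have heq : f' z = -k ^ 2 *
        ((1 - 2 * z ^ 2 + k ^ 2 * z ^ 4) /
          (Real.sqrt (1 - z ^ 2) * Real.sqrt (1 - k ^ 2 * z ^ 2) ^ 3)) := by
      rw [hf'_def]
      beta_reduce
      set a := Real.sqrt (1 - z ^ 2)
      set b := Real.sqrt (1 - k ^ 2 * z ^ 2)
      clear_value a b
      field_simp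
      linear_combination (-(b ^ 2 + (1 - k ^ 2 * z ^ 2))) * hb
    rw [heq]
    exact h.hasDerivWithinAt
  have hFTC := intervalIntegral.integral_eq_sub_of_hasDeriv_right_of_le
    (by norm_num : (0:ℝ) ≤ 1) hcont hderiv hIf'
  have hends : (fun z => -k ^ 2 * fb k z) 1 - (fun z => -k ^ 2 * fb k z) 0 = 0 := by
    norm_num [fb]
  rw [hends] at hFTC
  rw [hf'_def] at hFTC
  rw [intervalIntegral.integral_sub (hIj.const_mul _) hIe,
    intervalIntegral.integral_const_mul] at hFTC
  rw [eq_div_iff hk1.ne']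
  show _ * (1 - k ^ 2) = _
  rw [Ec]
  linarith [hFTC]

lemma hasDerivAt_F {μ z : ℝ} (hμ0 : 0 ≤ μ) (hμ1 : μ < 1) (hz : z ∈ Set.Ioo (0:ℝ) 1)
    {x : ℝ} (hx2 : x ^ 2 * z ^ 2 < 1) :
    HasDerivAt (fun x : ℝ => 1 / ((1 - μ * z ^ 2) * Real.sqrt ((1 - z ^ 2) * (1 - x ^ 2 * z ^ 2))))
      (x * z ^ 2 / ((1 - μ * z ^ 2) * Real.sqrt (1 - z ^ 2) * Real.sqrt (1 - x ^ 2 * z ^ 2) ^ 3))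
      x := by
  have hz2 : 0 < 1 - z ^ 2 := fact_z2 hz
  have hxz : 0 < 1 - x ^ 2 * z ^ 2 := by linarith
  have hμz : 0 < 1 - μ * z ^ 2 := fact_muz hμ0 hμ1 hz
  have hprod : 0 < (1 - z ^ 2) * (1 - x ^ 2 * z ^ 2) := mul_pos hz2 hxz
  have h1 : HasDerivAt (fun x : ℝ => 1 - x ^ 2 * z ^ 2) (-(2 * x * z ^ 2)) x := by
    have := ((hasDerivAt_pow 2 x).mul_const (z ^ 2)).const_sub 1
    refine this.congr_deriv ?_
    push_cast
    ring
  have hinner : HasDerivAt (fun x : ℝ => (1 - z ^ 2) * (1 - x ^ 2 * z ^ 2))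
      ((1 - z ^ 2) * -(2 * x * z ^ 2)) x := h1.const_mul (1 - z ^ 2)
  have hsq := hinner.sqrt hprod.ne'
  have hden := hsq.const_mul (1 - μ * z ^ 2)
  have hne : (1 - μ * z ^ 2) * Real.sqrt ((1 - z ^ 2) * (1 - x ^ 2 * z ^ 2)) ≠ 0 :=
    (mul_pos hμz (Real.sqrt_pos.mpr hprod)).ne'
  have hF := (hasDerivAt_const x (1:ℝ)).fun_div hden hne
  refine hF.congr_deriv ?_
  rw [Real.sqrt_mul hz2.le]
  have ha : Real.sqrt (1 - z ^ 2) ^ 2 = 1 - z ^ 2 := Real.sq_sqrt hz2.le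
  have hb : Real.sqrt (1 - x ^ 2 * z ^ 2) ^ 2 = 1 - x ^ 2 * z ^ 2 := Real.sq_sqrt hxz.le
  have ha0 : 0 < Real.sqrt (1 - z ^ 2) := Real.sqrt_pos.mpr hz2
  have hb0 : 0 < Real.sqrt (1 - x ^ 2 * z ^ 2) := Real.sqrt_pos.mpr hxz
  set a := Real.sqrt (1 - z ^ 2)
  set b := Real.sqrt (1 - x ^ 2 * z ^ 2)
  rw [← ha]
  field_simp
  ring

set_option maxHeartbeats 4000000 in
/-- derivative of `Π(μ,k)` with respect to the modulus `k`. -/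
theorem deriv_Pi_in_k (μ : ℝ) (hμ : μ ∈ Set.Ico (0 : ℝ) 1)
    (k : ℝ) (hk : k ∈ Set.Ioo (-1 : ℝ) 1) (hkμ : k ^ 2 ≠ μ) :
    HasDerivAt (fun k : ℝ => Pic μ k)
      (k * Ec k / ((1 - k ^ 2) * (k ^ 2 - μ)) + k * Pic μ k / (μ - k ^ 2)) k := by
  obtain ⟨hμ0, hμ1⟩ := hμ
  obtain ⟨hkl, hkr⟩ := hk
  have hk2 : k ^ 2 < 1 := by nlinarith
  have hk1 : (0:ℝ) < 1 - k ^ 2 := by linarith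
  have habs : |k| < 1 := abs_lt.mpr ⟨hkl, hkr⟩
  have habs0 : (0:ℝ) ≤ |k| := abs_nonneg k
  set b₀ : ℝ := (1 + |k|) / 2 with hb₀_def
  have hb₀1 : b₀ < 1 := by rw [hb₀_def]; linarith
  have hkb₀ : |k| < b₀ := by rw [hb₀_def]; linarith
  have hb₀0 : 0 < b₀ := by rw [hb₀_def]; linarith
  have hbsq : 0 < 1 - b₀ ^ 2 := by nlinarith
  set ε : ℝ := (1 - |k|) / 2 with hε_def
  have hε : 0 < ε := by rw [hε_def]; linarith
  have hball : ∀ x ∈ Metric.ball k ε, |x| ≤ b₀ := by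
    intro x hx
    rw [Metric.mem_ball, Real.dist_eq] at hx
    have h1 : |x| - |k| ≤ |x - k| := by
      have := abs_sub_abs_le_abs_sub x k
      linarith
    rw [hb₀_def]; rw [hε_def] at hx; linarith
  have hballsq : ∀ x ∈ Metric.ball k ε, ∀ z ∈ Set.Ioo (0:ℝ) 1, x ^ 2 * z ^ 2 < 1 := by
    intro x hx z hz
    have h1 : |x| ≤ b₀ := hball x hx
    have h2 : x ^ 2 ≤ b₀ ^ 2 := by
      have := pow_le_pow_left₀ (abs_nonneg x) h1 2
      rwa [sq_abs] at this
    nlinarith [sq_nonneg x, sq_nonneg z, hz.1, hz.2]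
  have hIp := II_p hμ0 hμ1 hk2
  have hIj := II_j hk2
  have hIe := II_e hk2
  set C : ℝ := 1 / ((1 - μ) * Real.sqrt (1 - b₀ ^ 2) ^ 3) with hC_def
  have h1μ : (0:ℝ) < 1 - μ := by linarith
  have hmeas1 : ∀ᶠ x in nhds k, AEStronglyMeasurable
      (fun t : ℝ => 1 / ((1 - μ * t ^ 2) * Real.sqrt ((1 - t ^ 2) * (1 - x ^ 2 * t ^ 2))))
      (MeasureTheory.volume.restrict (Set.uIoc (0:ℝ) 1)) := by
    filter_upwards with x
    have hden : Continuous fun t : ℝ =>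
        (1 - μ * t ^ 2) * Real.sqrt ((1 - t ^ 2) * (1 - x ^ 2 * t ^ 2)) := by fun_prop
    exact (measurable_const.div hden.measurable).aestronglyMeasurable
  have hmeas2 : AEStronglyMeasurable
      (fun t : ℝ => k * t ^ 2 /
        ((1 - μ * t ^ 2) * Real.sqrt (1 - t ^ 2) * Real.sqrt (1 - k ^ 2 * t ^ 2) ^ 3))
      (MeasureTheory.volume.restrict (Set.uIoc (0:ℝ) 1)) := by
    have hnum : Continuous fun t : ℝ => k * t ^ 2 := by fun_prop
    have hden : Continuous fun t : ℝ =>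
        (1 - μ * t ^ 2) * Real.sqrt (1 - t ^ 2) * Real.sqrt (1 - k ^ 2 * t ^ 2) ^ 3 := by
      fun_prop
    exact (hnum.measurable.div hden.measurable).aestronglyMeasurable
  have hbound : ∀ᵐ t ∂(MeasureTheory.volume : Measure ℝ), t ∈ Set.uIoc (0:ℝ) 1 →
      ∀ x ∈ Metric.ball k ε,
        ‖x * t ^ 2 / ((1 - μ * t ^ 2) * Real.sqrt (1 - t ^ 2) * Real.sqrt (1 - x ^ 2 * t ^ 2) ^ 3)‖
          ≤ C / Real.sqrt (1 - t) := by
    filter_upwards [ae_ne_one] with t ht1 htI x hx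
    rw [Set.uIoc_of_le (by norm_num : (0:ℝ) ≤ 1)] at htI
    have htz : t ∈ Set.Ioo (0:ℝ) 1 := ⟨htI.1, lt_of_le_of_ne htI.2 ht1⟩
    have hz2 := fact_z2 htz
    have hxz : 0 < 1 - x ^ 2 * t ^ 2 := by linarith [hballsq x hx t htz]
    have hμz := fact_muz hμ0 hμ1 htz
    have h1t := fact_z1 htz
    have habx : |x| ≤ b₀ := hball x hx
    have hx2 : x ^ 2 ≤ b₀ ^ 2 := by
      have := pow_le_pow_left₀ (abs_nonneg x) habx 2
      rwa [sq_abs] at this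
    have hbx : Real.sqrt (1 - b₀ ^ 2) ≤ Real.sqrt (1 - x ^ 2 * t ^ 2) :=
      Real.sqrt_le_sqrt (by nlinarith [sq_nonneg x, sq_nonneg t, htz.1, htz.2])
    have hD : 0 < (1 - μ * t ^ 2) * Real.sqrt (1 - t ^ 2) * Real.sqrt (1 - x ^ 2 * t ^ 2) ^ 3 := by
      have := Real.sqrt_pos.mpr hz2
      have := Real.sqrt_pos.mpr hxz
      positivity
    rw [Real.norm_eq_abs, abs_div, abs_of_pos hD, abs_mul]
    have hnum : |x| * |t ^ 2| ≤ 1 := by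
      rw [abs_of_nonneg (sq_nonneg t)]
      nlinarith [abs_nonneg x, htz.1, htz.2, sq_nonneg t]
    have hden : (1 - μ) * Real.sqrt (1 - t) * Real.sqrt (1 - b₀ ^ 2) ^ 3
        ≤ (1 - μ * t ^ 2) * Real.sqrt (1 - t ^ 2) * Real.sqrt (1 - x ^ 2 * t ^ 2) ^ 3 := by
      have t1 : (1 - μ) * Real.sqrt (1 - t) ≤ (1 - μ * t ^ 2) * Real.sqrt (1 - t ^ 2) :=
        mul_le_mul (by nlinarith [mul_nonneg hμ0 hz2.le]) (fact_a1 htz)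
          (Real.sqrt_nonneg _) hμz.le
      exact mul_le_mul t1 (pow_le_pow_left₀ (Real.sqrt_nonneg _) hbx 3)
        (by positivity) (by positivity)
    have hdpos : 0 < (1 - μ) * Real.sqrt (1 - t) * Real.sqrt (1 - b₀ ^ 2) ^ 3 := by
      have := Real.sqrt_pos.mpr h1t
      have := Real.sqrt_pos.mpr hbsq
      positivity
    calc |x| * |t ^ 2| / ((1 - μ * t ^ 2) * Real.sqrt (1 - t ^ 2) * Real.sqrt (1 - x ^ 2 * t ^ 2) ^ 3)
        ≤ 1 / ((1 - μ) * Real.sqrt (1 - t) * Real.sqrt (1 - b₀ ^ 2) ^ 3) :=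
          div_le_div₀ zero_le_one hnum hdpos hden
      _ = C / Real.sqrt (1 - t) := by
          have hs1 : Real.sqrt (1 - t) ≠ 0 := (Real.sqrt_pos.mpr h1t).ne'
          have hs2 : Real.sqrt (1 - b₀ ^ 2) ≠ 0 := (Real.sqrt_pos.mpr hbsq).ne'
          rw [hC_def]
          field_simp
  have hbint : IntervalIntegrable (fun t : ℝ => C / Real.sqrt (1 - t))
      MeasureTheory.volume 0 1 := by
    have := II_one_div_sqrt.const_mul C
    simpa [mul_one_div, div_eq_mul_inv] using this
  have hdiff : ∀ᵐ t ∂(MeasureTheory.volume : Measure ℝ), t ∈ Set.uIoc (0:ℝ) 1 →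
      ∀ x ∈ Metric.ball k ε,
        HasDerivAt (fun x : ℝ => 1 / ((1 - μ * t ^ 2) * Real.sqrt ((1 - t ^ 2) * (1 - x ^ 2 * t ^ 2))))
          (x * t ^ 2 / ((1 - μ * t ^ 2) * Real.sqrt (1 - t ^ 2) * Real.sqrt (1 - x ^ 2 * t ^ 2) ^ 3))
          x := by
    filter_upwards [ae_ne_one] with t ht1 htI x hx
    rw [Set.uIoc_of_le (by norm_num : (0:ℝ) ≤ 1)] at htI
    have htz : t ∈ Set.Ioo (0:ℝ) 1 := ⟨htI.1, lt_of_le_of_ne htI.2 ht1⟩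
    exact hasDerivAt_F hμ0 hμ1 htz (hballsq x hx t htz)
  have main := intervalIntegral.hasDerivAt_integral_of_dominated_loc_of_deriv_le
    (Metric.ball_mem_nhds k hε) hmeas1 hIp hmeas2 hbound hbint hdiff
  -- now use the conclusion
  have hd := main.2
  have hkμ' : k ^ 2 - μ ≠ 0 := sub_ne_zero.mpr hkμ
  have hμk' : μ - k ^ 2 ≠ 0 := fun h => hkμ' (by linarith [sub_eq_zero.mp h])
  have hcong : (∫ t in (0:ℝ)..1, k * t ^ 2 /
      ((1 - μ * t ^ 2) * Real.sqrt (1 - t ^ 2) * Real.sqrt (1 - k ^ 2 * t ^ 2) ^ 3))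
      = ∫ t in (0:ℝ)..1, (k / (k ^ 2 - μ)) *
        ((1 / (Real.sqrt (1 - t ^ 2) * Real.sqrt (1 - k ^ 2 * t ^ 2) ^ 3))
          - (1 / ((1 - μ * t ^ 2) * Real.sqrt ((1 - t ^ 2) * (1 - k ^ 2 * t ^ 2))))) := by
    apply intervalIntegral.integral_congr_ae
    filter_upwards [ae_ne_one] with t ht1 htI
    rw [Set.uIoc_of_le (by norm_num : (0:ℝ) ≤ 1)] at htI
    have htz : t ∈ Set.Ioo (0:ℝ) 1 := ⟨htI.1, lt_of_le_of_ne htI.2 ht1⟩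
    have hz2 := fact_z2 htz
    have hkz := fact_kz hk2 htz
    have hμz := fact_muz hμ0 hμ1 htz
    have ha : Real.sqrt (1 - t ^ 2) ^ 2 = 1 - t ^ 2 := Real.sq_sqrt hz2.le
    have hb : Real.sqrt (1 - k ^ 2 * t ^ 2) ^ 2 = 1 - k ^ 2 * t ^ 2 := Real.sq_sqrt hkz.le
    have ha0 : 0 < Real.sqrt (1 - t ^ 2) := Real.sqrt_pos.mpr hz2
    have hb0 : 0 < Real.sqrt (1 - k ^ 2 * t ^ 2) := Real.sqrt_pos.mpr hkz
    rw [Real.sqrt_mul hz2.le]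
    set a := Real.sqrt (1 - t ^ 2)
    set b := Real.sqrt (1 - k ^ 2 * t ^ 2)
    clear_value a b
    have hμz' : 1 - t ^ 2 * μ ≠ 0 := by nlinarith
    field_simp
    linear_combination k * hb
  rw [hcong] at hd
  rw [intervalIntegral.integral_const_mul, intervalIntegral.integral_sub hIj hIp] at hd
  rw [J_eq hk2 hIj hIe] at hd
  have hPic : (∫ t in (0:ℝ)..1,
      1 / ((1 - μ * t ^ 2) * Real.sqrt ((1 - t ^ 2) * (1 - k ^ 2 * t ^ 2)))) = Pic μ k := rfl
  rw [hPic] at hd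
  have hgoal : k / (k ^ 2 - μ) * (Ec k / (1 - k ^ 2) - Pic μ k)
      = k * Ec k / ((1 - k ^ 2) * (k ^ 2 - μ)) + k * Pic μ k / (μ - k ^ 2) := by
    field_simp
    ring
  rw [hgoal] at hd
  exact hd
end

section
/- Let P₁, P₂, P₃ be real polynomials in the two variables (μ,k). If P₁(μ,k)·K(k) + P₂(μ,k)·E(k) + P₃(μ,k)·Π(μ,k) = 0 for all (μ,k) ∈ (0,1) × (−1,1) with μ ≠ k², then P₁, P₂ and P₃ are identically zero. (Equivalently, K(k), E(k) and Π(μ,k) are linearly independent with respect to coefficients that are rational functions of μ and k.) -/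
open MeasureTheory intervalIntegral Set Filter Polynomial Real Topology

lemma II_one_sub_rpow {r : ℝ} (hr : -1 < r) :
    IntervalIntegrable (fun z : ℝ => (1 - z) ^ r) volume 0 1 := by
  have := ((intervalIntegrable_rpow' (a := 0) (b := 1) hr).comp_sub_left 1).symm
  simpa using this

lemma integral_one_sub_rpow {r : ℝ} (hr : -1 < r) :
    ∫ z in (0:ℝ)..1, (1 - z) ^ r = 1 / (r + 1) := by
  have := intervalIntegral.integral_comp_sub_left (a := 0) (b := 1) (fun x : ℝ => x ^ r) 1
  rw [this]
  norm_num
  rw [integral_rpow (Or.inl hr)]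
  rw [Real.zero_rpow (by linarith), Real.one_rpow]
  ring

lemma integral_one_div_one_sub_mul {c : ℝ} (hc0 : 0 < c) (hc1 : c < 1) :
    ∫ z in (0:ℝ)..1, 1 / (1 - c * z) = -Real.log (1 - c) / c := by
  have hpos : ∀ z ∈ Set.uIcc (0:ℝ) 1, 0 < 1 - c * z := by
    intro z hz
    rw [Set.uIcc_of_le zero_le_one] at hz
    nlinarith [hz.1, hz.2]
  have hderiv : ∀ z ∈ Set.uIcc (0:ℝ) 1,
      HasDerivAt (fun z => -Real.log (1 - c * z) / c) (1 / (1 - c * z)) z := by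
    intro z hz
    have h1 : HasDerivAt (fun z : ℝ => 1 - c * z) (-c) z := by
      simpa using ((hasDerivAt_id z).const_mul c).const_sub 1
    have h2 := (Real.hasDerivAt_log (ne_of_gt (hpos z hz))).comp z h1
    have h3 := (h2.neg).div_const c
    refine h3.congr_deriv ?_
    have := (hpos z hz).ne'
    field_simp
  have hcont : ContinuousOn (fun z : ℝ => 1 / (1 - c * z)) (Set.uIcc 0 1) := by
    apply ContinuousOn.div continuousOn_const
    · fun_prop
    · intro z hz; exact ne_of_gt (hpos z hz)
  have := intervalIntegral.integral_eq_sub_of_hasDerivAt hderiv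
    (hcont.intervalIntegrable)
  rw [this]
  norm_num

lemma integral_mono_Ico {f g : ℝ → ℝ} (hf : IntervalIntegrable f volume 0 1)
    (hg : IntervalIntegrable g volume 0 1) (h : ∀ x ∈ Set.Ico (0:ℝ) 1, f x ≤ g x) :
    ∫ x in (0:ℝ)..1, f x ≤ ∫ x in (0:ℝ)..1, g x := by
  apply intervalIntegral.integral_mono_ae_restrict zero_le_one hf hg
  have h1 : ∀ᵐ x ∂(volume.restrict (Set.Icc (0:ℝ) 1)), x ≠ 1 := by
    apply ae_restrict_of_ae
    have : {x : ℝ | ¬ x ≠ 1} = {1} := by ext x; simp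
    rw [MeasureTheory.ae_iff, this]
    exact Real.volume_singleton
  have h2 := MeasureTheory.ae_restrict_mem (μ := volume) (measurableSet_Icc (a := (0:ℝ)) (b := 1))
  filter_upwards [h1, h2] with x hx1 hx2
  exact h x ⟨hx2.1, lt_of_le_of_ne hx2.2 hx1⟩

lemma rpow_neg_half_eq {x : ℝ} (hx : 0 ≤ x) : x ^ (-(1/2):ℝ) = (Real.sqrt x)⁻¹ := by
  rw [Real.rpow_neg hx, Real.sqrt_eq_rpow]

-- pointwise bound for the K integrand
lemma fK_le {k z : ℝ} (hk : k ∈ Set.Ioo (-1:ℝ) 1) (hz : z ∈ Set.Icc (0:ℝ) 1) :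
    1 / Real.sqrt ((1 - z ^ 2) * (1 - k ^ 2 * z ^ 2))
      ≤ (Real.sqrt (1 - k ^ 2))⁻¹ * (1 - z) ^ (-(1/2):ℝ) := by
  obtain ⟨hz0, hz1⟩ := hz
  have hk2 : k ^ 2 < 1 := by nlinarith [hk.1, hk.2]
  rcases eq_or_lt_of_le hz1 with rfl | hz1
  · simp [Real.zero_rpow (by norm_num : (-(1/2):ℝ) ≠ 0)]
  · have hb : (0:ℝ) < 1 - z := by linarith
    have key : (1 - z) * (1 - k ^ 2) ≤ (1 - z ^ 2) * (1 - k ^ 2 * z ^ 2) := by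
      have a1 : 1 - z ≤ 1 - z ^ 2 := by nlinarith
      have a2 : 1 - k ^ 2 ≤ 1 - k ^ 2 * z ^ 2 := by nlinarith [sq_nonneg k]
      exact mul_le_mul a1 a2 (by linarith) (by nlinarith)
    have h1 : Real.sqrt ((1 - z) * (1 - k ^ 2)) ≤ Real.sqrt ((1 - z ^ 2) * (1 - k ^ 2 * z ^ 2)) :=
      Real.sqrt_le_sqrt key
    have hpos : (0:ℝ) < Real.sqrt ((1 - z) * (1 - k ^ 2)) :=
      Real.sqrt_pos.mpr (mul_pos hb (by linarith))
    calc 1 / Real.sqrt ((1 - z ^ 2) * (1 - k ^ 2 * z ^ 2))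
        ≤ 1 / Real.sqrt ((1 - z) * (1 - k ^ 2)) := by
          apply one_div_le_one_div_of_le hpos h1
      _ = (Real.sqrt (1 - k ^ 2))⁻¹ * (1 - z) ^ (-(1/2):ℝ) := by
          rw [Real.sqrt_mul (by linarith), rpow_neg_half_eq (by linarith)]
          rw [one_div, mul_inv]
          ring

-- pointwise bound for the E integrand
lemma fE_le {k z : ℝ} (hk : k ∈ Set.Ioo (-1:ℝ) 1) (hz : z ∈ Set.Icc (0:ℝ) 1) :
    Real.sqrt (1 - k ^ 2 * z ^ 2) / Real.sqrt (1 - z ^ 2) ≤ (1 - z) ^ (-(1/2):ℝ) := by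
  obtain ⟨hz0, hz1⟩ := hz
  have hk2 : k ^ 2 < 1 := by nlinarith [hk.1, hk.2]
  rcases eq_or_lt_of_le hz1 with rfl | hz1
  · simp [Real.zero_rpow (by norm_num : (-(1/2):ℝ) ≠ 0)]
  · have hb : (0:ℝ) < 1 - z := by linarith
    have h2 : (0:ℝ) < 1 - z ^ 2 := by nlinarith
    rw [rpow_neg_half_eq (by linarith), div_le_iff₀ (Real.sqrt_pos.mpr h2)]
    rw [← Real.sqrt_inv, ← Real.sqrt_mul (by positivity)]
    apply Real.sqrt_le_sqrt
    rw [← one_div]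
    rw [div_mul_eq_mul_div, le_div_iff₀ hb]
    nlinarith [sq_nonneg (k*z), sq_nonneg z]

-- pointwise bound for the Π integrand
lemma fP_le {μ k z : ℝ} (hμ : μ ∈ Set.Ioo (0:ℝ) 1) (hk : k ∈ Set.Ioo (-1:ℝ) 1)
    (hz : z ∈ Set.Icc (0:ℝ) 1) :
    1 / ((1 - μ * z ^ 2) * Real.sqrt ((1 - z ^ 2) * (1 - k ^ 2 * z ^ 2)))
      ≤ (1 - μ) ^ (-(3/4):ℝ) * (Real.sqrt (1 - k ^ 2))⁻¹ * (1 - z) ^ (-(3/4):ℝ) := by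
  obtain ⟨hz0, hz1⟩ := hz
  obtain ⟨hμ0, hμ1⟩ := hμ
  have hk2 : k ^ 2 < 1 := by nlinarith [hk.1, hk.2]
  have ha : (0:ℝ) < 1 - μ := by linarith
  rcases eq_or_lt_of_le hz1 with rfl | hz1
  · simp [Real.zero_rpow (by norm_num : (-(3/4):ℝ) ≠ 0)]
  · have hb : (0:ℝ) < 1 - z := by linarith
    have hb2 : (0:ℝ) < 1 - z ^ 2 := by nlinarith
    have hc : (0:ℝ) < 1 - k ^ 2 * z ^ 2 := by nlinarith [sq_nonneg k, sq_nonneg (k*z)]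
    have hd : (0:ℝ) < 1 - μ * z ^ 2 := by nlinarith
    -- 1 - μ z² ≥ (1-μ)^{3/4} (1-z²)^{1/4}
    have e1 : (1 - μ) ^ ((3:ℝ)/4) * (1 - z ^ 2) ^ ((1:ℝ)/4) ≤ 1 - μ * z ^ 2 := by
      have t1 : (1 - μ) ^ ((3:ℝ)/4) ≤ (1 - μ * z ^ 2) ^ ((3:ℝ)/4) :=
        Real.rpow_le_rpow ha.le (by nlinarith) (by norm_num)
      have t2 : (1 - z ^ 2) ^ ((1:ℝ)/4) ≤ (1 - μ * z ^ 2) ^ ((1:ℝ)/4) :=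
        Real.rpow_le_rpow hb2.le (by nlinarith) (by norm_num)
      calc (1 - μ) ^ ((3:ℝ)/4) * (1 - z ^ 2) ^ ((1:ℝ)/4)
          ≤ (1 - μ * z ^ 2) ^ ((3:ℝ)/4) * (1 - μ * z ^ 2) ^ ((1:ℝ)/4) :=
            mul_le_mul t1 t2 (by positivity) (by positivity)
        _ = 1 - μ * z ^ 2 := by
            rw [← Real.rpow_add hd]; norm_num
    -- sqrt part ≥ (1-z²)^{1/2} √(1-k²)
    have e2 : (1 - z ^ 2) ^ ((1:ℝ)/2) * Real.sqrt (1 - k ^ 2)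
        ≤ Real.sqrt ((1 - z ^ 2) * (1 - k ^ 2 * z ^ 2)) := by
      rw [Real.sqrt_mul hb2.le, ← Real.sqrt_eq_rpow]
      apply mul_le_mul_of_nonneg_left _ (Real.sqrt_nonneg _)
      exact Real.sqrt_le_sqrt (by nlinarith [sq_nonneg k])
    -- combine
    have e3 : (1 - μ) ^ ((3:ℝ)/4) * Real.sqrt (1 - k ^ 2) * (1 - z) ^ ((3:ℝ)/4)
        ≤ (1 - μ * z ^ 2) * Real.sqrt ((1 - z ^ 2) * (1 - k ^ 2 * z ^ 2)) := by
      have e4 : (1 - z) ^ ((3:ℝ)/4) ≤ (1 - z ^ 2) ^ ((3:ℝ)/4) :=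
        Real.rpow_le_rpow hb.le (by nlinarith) (by norm_num)
      have e5 : (1 - z ^ 2) ^ ((1:ℝ)/4) * (1 - z ^ 2) ^ ((1:ℝ)/2) = (1 - z ^ 2) ^ ((3:ℝ)/4) := by
        rw [← Real.rpow_add hb2]; norm_num
      calc (1 - μ) ^ ((3:ℝ)/4) * Real.sqrt (1 - k ^ 2) * (1 - z) ^ ((3:ℝ)/4)
          ≤ (1 - μ) ^ ((3:ℝ)/4) * Real.sqrt (1 - k ^ 2) * (1 - z ^ 2) ^ ((3:ℝ)/4) := by
            apply mul_le_mul_of_nonneg_left e4 (by positivity)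
        _ = ((1 - μ) ^ ((3:ℝ)/4) * (1 - z ^ 2) ^ ((1:ℝ)/4)) * ((1 - z ^ 2) ^ ((1:ℝ)/2)
              * Real.sqrt (1 - k ^ 2)) := by rw [← e5]; ring
        _ ≤ (1 - μ * z ^ 2) * Real.sqrt ((1 - z ^ 2) * (1 - k ^ 2 * z ^ 2)) := by
            apply mul_le_mul e1 e2 (by positivity) hd.le
    have hpos : (0:ℝ) < (1 - μ) ^ ((3:ℝ)/4) * Real.sqrt (1 - k ^ 2) * (1 - z) ^ ((3:ℝ)/4) := by
      have : (0:ℝ) < Real.sqrt (1 - k ^ 2) := Real.sqrt_pos.mpr (by linarith)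
      positivity
    calc 1 / ((1 - μ * z ^ 2) * Real.sqrt ((1 - z ^ 2) * (1 - k ^ 2 * z ^ 2)))
        ≤ 1 / ((1 - μ) ^ ((3:ℝ)/4) * Real.sqrt (1 - k ^ 2) * (1 - z) ^ ((3:ℝ)/4)) :=
          one_div_le_one_div_of_le hpos e3
      _ = (1 - μ) ^ (-(3/4):ℝ) * (Real.sqrt (1 - k ^ 2))⁻¹ * (1 - z) ^ (-(3/4):ℝ) := by
          rw [one_div, mul_inv, mul_inv, Real.rpow_neg ha.le, Real.rpow_neg hb.le]

lemma measK (k : ℝ) :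
    Measurable (fun z : ℝ => 1 / Real.sqrt ((1 - z ^ 2) * (1 - k ^ 2 * z ^ 2))) := by
  apply Measurable.div measurable_const
  exact Real.continuous_sqrt.measurable.comp (by fun_prop)

lemma measE (k : ℝ) :
    Measurable (fun z : ℝ => Real.sqrt (1 - k ^ 2 * z ^ 2) / Real.sqrt (1 - z ^ 2)) := by
  apply Measurable.div
  · exact Real.continuous_sqrt.measurable.comp (by fun_prop)
  · exact Real.continuous_sqrt.measurable.comp (by fun_prop)

lemma measP (μ k : ℝ) :
    Measurable (fun z : ℝ =>
      1 / ((1 - μ * z ^ 2) * Real.sqrt ((1 - z ^ 2) * (1 - k ^ 2 * z ^ 2)))) := by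
  apply Measurable.div measurable_const
  exact ((measurable_const.sub ((measurable_id.pow_const 2).const_mul μ)).mul
    (Real.continuous_sqrt.measurable.comp (by fun_prop)))

lemma fK_nonneg (k z : ℝ) : 0 ≤ 1 / Real.sqrt ((1 - z ^ 2) * (1 - k ^ 2 * z ^ 2)) := by
  positivity

lemma fE_nonneg (k z : ℝ) : 0 ≤ Real.sqrt (1 - k ^ 2 * z ^ 2) / Real.sqrt (1 - z ^ 2) := by
  positivity

lemma fP_nonneg {μ k z : ℝ} (hμ : μ ∈ Set.Ioo (0:ℝ) 1) (hz : z ∈ Set.Icc (0:ℝ) 1) :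
    0 ≤ 1 / ((1 - μ * z ^ 2) * Real.sqrt ((1 - z ^ 2) * (1 - k ^ 2 * z ^ 2))) := by
  apply div_nonneg zero_le_one
  apply mul_nonneg _ (Real.sqrt_nonneg _)
  nlinarith [hz.1, hz.2, hμ.1.le, hμ.2.le, sq_nonneg z]

lemma intK {k : ℝ} (hk : k ∈ Set.Ioo (-1:ℝ) 1) :
    IntervalIntegrable (fun z : ℝ => 1 / Real.sqrt ((1 - z ^ 2) * (1 - k ^ 2 * z ^ 2)))
      volume 0 1 := by
  apply IntervalIntegrable.mono_fun'
    (g := fun z => (Real.sqrt (1 - k ^ 2))⁻¹ * (1 - z) ^ (-(1/2):ℝ))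
  · exact (II_one_sub_rpow (by norm_num)).const_mul _
  · exact (measK k).aestronglyMeasurable
  · rw [Set.uIoc_of_le (zero_le_one (α := ℝ))]
    filter_upwards [MeasureTheory.ae_restrict_mem measurableSet_Ioc] with z hz
    rw [Real.norm_eq_abs, abs_of_nonneg (fK_nonneg k z)]
    exact fK_le hk ⟨hz.1.le, hz.2⟩

lemma intE {k : ℝ} (hk : k ∈ Set.Ioo (-1:ℝ) 1) :
    IntervalIntegrable (fun z : ℝ => Real.sqrt (1 - k ^ 2 * z ^ 2) / Real.sqrt (1 - z ^ 2))
      volume 0 1 := by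
  apply IntervalIntegrable.mono_fun' (g := fun z => (1 - z) ^ (-(1/2):ℝ))
  · exact II_one_sub_rpow (by norm_num)
  · exact (measE k).aestronglyMeasurable
  · rw [Set.uIoc_of_le (zero_le_one (α := ℝ))]
    filter_upwards [MeasureTheory.ae_restrict_mem measurableSet_Ioc] with z hz
    rw [Real.norm_eq_abs, abs_of_nonneg (fE_nonneg k z)]
    exact fE_le hk ⟨hz.1.le, hz.2⟩

lemma intP {μ k : ℝ} (hμ : μ ∈ Set.Ioo (0:ℝ) 1) (hk : k ∈ Set.Ioo (-1:ℝ) 1) :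
    IntervalIntegrable (fun z : ℝ =>
      1 / ((1 - μ * z ^ 2) * Real.sqrt ((1 - z ^ 2) * (1 - k ^ 2 * z ^ 2)))) volume 0 1 := by
  apply IntervalIntegrable.mono_fun'
    (g := fun z => (1 - μ) ^ (-(3/4):ℝ) * (Real.sqrt (1 - k ^ 2))⁻¹ * (1 - z) ^ (-(3/4):ℝ))
  · exact (II_one_sub_rpow (by norm_num)).const_mul _
  · exact (measP μ k).aestronglyMeasurable
  · rw [Set.uIoc_of_le (zero_le_one (α := ℝ))]
    filter_upwards [MeasureTheory.ae_restrict_mem measurableSet_Ioc] with z hz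
    rw [Real.norm_eq_abs, abs_of_nonneg (fP_nonneg hμ ⟨hz.1.le, hz.2⟩)]
    exact fP_le hμ hk ⟨hz.1.le, hz.2⟩


lemma Kc_le {k : ℝ} (hk : k ∈ Set.Ioo (-1:ℝ) 1) : Kc k ≤ 2 * (Real.sqrt (1 - k ^ 2))⁻¹ := by
  have h1 : Kc k ≤ ∫ z in (0:ℝ)..1, (Real.sqrt (1 - k ^ 2))⁻¹ * (1 - z) ^ (-(1/2):ℝ) := by
    rw [Kc]
    apply intervalIntegral.integral_mono_on zero_le_one (intK hk)
      ((II_one_sub_rpow (by norm_num)).const_mul _)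
    intro z hz; exact fK_le hk hz
  rw [intervalIntegral.integral_const_mul, integral_one_sub_rpow (by norm_num)] at h1
  calc Kc k ≤ (Real.sqrt (1 - k ^ 2))⁻¹ * (1 / (-(1/2) + 1)) := h1
    _ = 2 * (Real.sqrt (1 - k ^ 2))⁻¹ := by norm_num; ring

lemma Ec_le {k : ℝ} (hk : k ∈ Set.Ioo (-1:ℝ) 1) : Ec k ≤ 2 := by
  have h1 : Ec k ≤ ∫ z in (0:ℝ)..1, (1 - z) ^ (-(1/2):ℝ) := by
    rw [Ec]
    apply intervalIntegral.integral_mono_on zero_le_one (intE hk)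
      (II_one_sub_rpow (by norm_num))
    intro z hz; exact fE_le hk hz
  rw [integral_one_sub_rpow (by norm_num)] at h1
  calc Ec k ≤ 1 / (-(1/2) + 1) := h1
    _ = 2 := by norm_num

lemma Pic_le {μ k : ℝ} (hμ : μ ∈ Set.Ioo (0:ℝ) 1) (hk : k ∈ Set.Ioo (-1:ℝ) 1) :
    Pic μ k ≤ 4 * ((1 - μ) ^ (-(3/4):ℝ) * (Real.sqrt (1 - k ^ 2))⁻¹) := by
  have h1 : Pic μ k ≤ ∫ z in (0:ℝ)..1,
      (1 - μ) ^ (-(3/4):ℝ) * (Real.sqrt (1 - k ^ 2))⁻¹ * (1 - z) ^ (-(3/4):ℝ) := by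
    rw [Pic]
    apply intervalIntegral.integral_mono_on zero_le_one (intP hμ hk)
      ((II_one_sub_rpow (by norm_num)).const_mul _)
    intro z hz; exact fP_le hμ hk hz
  rw [intervalIntegral.integral_const_mul, integral_one_sub_rpow (by norm_num)] at h1
  calc Pic μ k ≤ (1 - μ) ^ (-(3/4):ℝ) * (Real.sqrt (1 - k ^ 2))⁻¹ * (1 / (-(3/4) + 1)) := h1
    _ = 4 * ((1 - μ) ^ (-(3/4):ℝ) * (Real.sqrt (1 - k ^ 2))⁻¹) := by norm_num; ring

lemma fK_ge {k z : ℝ} (hk : k ∈ Set.Ioo (0:ℝ) 1) (hz : z ∈ Set.Ico (0:ℝ) 1) :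
    1 / (2 * (1 - k * z)) ≤ 1 / Real.sqrt ((1 - z ^ 2) * (1 - k ^ 2 * z ^ 2)) := by
  obtain ⟨hz0, hz1⟩ := hz
  obtain ⟨hk0, hk1⟩ := hk
  have hkz : k * z < 1 := by nlinarith
  have hb2 : (0:ℝ) < 1 - z ^ 2 := by nlinarith
  have hc : (0:ℝ) < 1 - k ^ 2 * z ^ 2 := by nlinarith
  have h1 : Real.sqrt ((1 - z ^ 2) * (1 - k ^ 2 * z ^ 2)) ≤ 2 * (1 - k * z) := by
    rw [show (2:ℝ) * (1 - k * z) = Real.sqrt ((2 * (1 - k * z)) ^ 2) from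
      (Real.sqrt_sq (by nlinarith)).symm]
    apply Real.sqrt_le_sqrt
    have e1 : 1 - z ≤ 1 - k * z := by nlinarith
    have A : (1 - z) * (1 - k * z) ≤ (1 - k * z) ^ 2 := by nlinarith
    have B : (1 + z) * (1 + k * z) ≤ 4 := by nlinarith [mul_nonneg hz0 hk0.le]
    have C : (1 - z ^ 2) * (1 - k ^ 2 * z ^ 2)
        = ((1 - z) * (1 - k * z)) * ((1 + z) * (1 + k * z)) := by ring
    rw [C]
    calc ((1 - z) * (1 - k * z)) * ((1 + z) * (1 + k * z))
        ≤ (1 - k * z) ^ 2 * 4 :=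
          mul_le_mul A B (by nlinarith [mul_nonneg hz0 hk0.le]) (sq_nonneg _)
      _ = (2 * (1 - k * z)) ^ 2 := by ring
  exact one_div_le_one_div_of_le (Real.sqrt_pos.mpr (by positivity)) h1

lemma fP_ge {μ k z : ℝ} (hμ : μ ∈ Set.Ioo (0:ℝ) 1) (hk : k ∈ Set.Ioo (-1:ℝ) 1)
    (hz : z ∈ Set.Ico (0:ℝ) 1) :
    1 / (2 * (1 - μ * z)) ≤
      1 / ((1 - μ * z ^ 2) * Real.sqrt ((1 - z ^ 2) * (1 - k ^ 2 * z ^ 2))) := by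
  obtain ⟨hz0, hz1⟩ := hz
  obtain ⟨hμ0, hμ1⟩ := hμ
  have hd : (0:ℝ) < 1 - μ * z ^ 2 := by nlinarith
  have h1 : (1 - μ * z ^ 2) * Real.sqrt ((1 - z ^ 2) * (1 - k ^ 2 * z ^ 2))
      ≤ 2 * (1 - μ * z) := by
    have hs : Real.sqrt ((1 - z ^ 2) * (1 - k ^ 2 * z ^ 2)) ≤ 1 := by
      apply Real.sqrt_le_one.mpr
      have hc : (0:ℝ) < 1 - k ^ 2 * z ^ 2 := by
        have e1 : (0:ℝ) < 1 - k ^ 2 := by nlinarith [hk.1, hk.2]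
        nlinarith [mul_nonneg (sq_nonneg k) (by nlinarith : (0:ℝ) ≤ 1 - z ^ 2)]
      nlinarith [mul_nonneg (sq_nonneg z) hc.le, sq_nonneg (k*z)]
    calc (1 - μ * z ^ 2) * Real.sqrt ((1 - z ^ 2) * (1 - k ^ 2 * z ^ 2))
        ≤ (1 - μ * z ^ 2) * 1 := by
          apply mul_le_mul_of_nonneg_left hs hd.le
      _ ≤ 2 * (1 - μ * z) := by nlinarith [sq_nonneg (1 - μ * z), mul_nonneg hμ0.le (sq_nonneg z)]
  have hpos : (0:ℝ) < (1 - μ * z ^ 2) * Real.sqrt ((1 - z ^ 2) * (1 - k ^ 2 * z ^ 2)) := by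
    apply mul_pos hd
    apply Real.sqrt_pos.mpr
    have hb2 : (0:ℝ) < 1 - z ^ 2 := by nlinarith
    have hc : (0:ℝ) < 1 - k ^ 2 * z ^ 2 := by
      have e1 : (0:ℝ) < 1 - k ^ 2 := by nlinarith [hk.1, hk.2]
      nlinarith [mul_nonneg (sq_nonneg k) (by nlinarith : (0:ℝ) ≤ 1 - z ^ 2)]
    positivity
  exact one_div_le_one_div_of_le hpos h1

lemma int_inv_lin {c : ℝ} (hc0 : 0 < c) (hc1 : c < 1) :
    IntervalIntegrable (fun z : ℝ => 1 / (2 * (1 - c * z))) volume 0 1 := by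
  apply ContinuousOn.intervalIntegrable
  apply ContinuousOn.div continuousOn_const
  · fun_prop
  · intro z hz
    rw [Set.uIcc_of_le zero_le_one] at hz
    have : 0 < 1 - c * z := by nlinarith [hz.1, hz.2]
    positivity

lemma integral_inv_lin {c : ℝ} (hc0 : 0 < c) (hc1 : c < 1) :
    ∫ z in (0:ℝ)..1, 1 / (2 * (1 - c * z)) = -Real.log (1 - c) / (2 * c) := by
  have : (fun z : ℝ => 1 / (2 * (1 - c * z))) = fun z => (1/2) * (1 / (1 - c * z)) := by
    funext z; rw [one_div, one_div, one_div, mul_inv, mul_comm]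
  rw [this, intervalIntegral.integral_const_mul, integral_one_div_one_sub_mul hc0 hc1]
  ring

lemma Kc_ge {k : ℝ} (hk : k ∈ Set.Ioo (0:ℝ) 1) : -Real.log (1 - k) / 2 ≤ Kc k := by
  have h1 : ∫ z in (0:ℝ)..1, 1 / (2 * (1 - k * z)) ≤ Kc k := by
    rw [Kc]
    apply integral_mono_Ico (int_inv_lin hk.1 hk.2)
      (intK ⟨by linarith [hk.1], hk.2⟩)
    intro z hz; exact fK_ge hk hz
  rw [integral_inv_lin hk.1 hk.2] at h1
  refine le_trans ?_ h1
  have hlog : 0 ≤ -Real.log (1 - k) := by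
    rw [neg_nonneg]
    exact Real.log_nonpos (by linarith [hk.1, hk.2]) (by linarith [hk.1])
  rw [div_le_div_iff₀ (by norm_num) (by linarith [hk.1])]
  nlinarith [hk.1, hk.2]

lemma Pic_ge {μ k : ℝ} (hμ : μ ∈ Set.Ioo (0:ℝ) 1) (hk : k ∈ Set.Ioo (-1:ℝ) 1) :
    -Real.log (1 - μ) / 2 ≤ Pic μ k := by
  have h1 : ∫ z in (0:ℝ)..1, 1 / (2 * (1 - μ * z)) ≤ Pic μ k := by
    rw [Pic]
    apply integral_mono_Ico (int_inv_lin hμ.1 hμ.2) (intP hμ hk)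
    intro z hz; exact fP_ge hμ hk hz
  rw [integral_inv_lin hμ.1 hμ.2] at h1
  refine le_trans ?_ h1
  have hlog : 0 ≤ -Real.log (1 - μ) := by
    rw [neg_nonneg]
    exact Real.log_nonpos (by linarith [hμ.1, hμ.2]) (by linarith [hμ.1])
  rw [div_le_div_iff₀ (by norm_num) (by linarith [hμ.1])]
  nlinarith [hμ.1, hμ.2]

lemma Ec_ge {k : ℝ} (hk : k ∈ Set.Ioo (-1:ℝ) 1) : 1/2 ≤ Ec k := by
  have hI1 : IntervalIntegrable
      (fun z : ℝ => Real.sqrt (1 - k ^ 2 * z ^ 2) / Real.sqrt (1 - z ^ 2)) volume 0 (1/2) :=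
    (intE hk).mono_set' (by rw [Set.uIoc_of_le (by norm_num : (0:ℝ) ≤ 1/2),
      Set.uIoc_of_le zero_le_one]; exact Set.Ioc_subset_Ioc_right (by norm_num))
  have hI2 : IntervalIntegrable
      (fun z : ℝ => Real.sqrt (1 - k ^ 2 * z ^ 2) / Real.sqrt (1 - z ^ 2)) volume (1/2) 1 :=
    (intE hk).mono_set' (by rw [Set.uIoc_of_le (by norm_num : (1/2:ℝ) ≤ 1),
      Set.uIoc_of_le zero_le_one]; exact Set.Ioc_subset_Ioc_left (by norm_num))
  have hsplit : Ec k = (∫ z in (0:ℝ)..(1/2), Real.sqrt (1 - k ^ 2 * z ^ 2) / Real.sqrt (1 - z ^ 2))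
      + ∫ z in (1/2:ℝ)..1, Real.sqrt (1 - k ^ 2 * z ^ 2) / Real.sqrt (1 - z ^ 2) := by
    rw [Ec, ← intervalIntegral.integral_add_adjacent_intervals hI1 hI2]
  have hpart1 : (1:ℝ)/2 ≤ ∫ z in (0:ℝ)..(1/2),
      Real.sqrt (1 - k ^ 2 * z ^ 2) / Real.sqrt (1 - z ^ 2) := by
    have := intervalIntegral.integral_mono_on (by norm_num : (0:ℝ) ≤ 1/2)
      (intervalIntegrable_const (c := (1:ℝ))) hI1 ?_
    · simpa using this
    · intro z hz
      have hz0 := hz.1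
      have hz1 : z ≤ 1/2 := hz.2
      have h2 : (0:ℝ) < 1 - z ^ 2 := by nlinarith
      rw [le_div_iff₀ (Real.sqrt_pos.mpr h2), one_mul]
      apply Real.sqrt_le_sqrt
      have e1 : (0:ℝ) < 1 - k ^ 2 := by nlinarith [hk.1, hk.2]
      nlinarith [mul_nonneg e1.le (sq_nonneg z)]
  have hpart2 : (0:ℝ) ≤ ∫ z in (1/2:ℝ)..1,
      Real.sqrt (1 - k ^ 2 * z ^ 2) / Real.sqrt (1 - z ^ 2) := by
    apply intervalIntegral.integral_nonneg (by norm_num)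
    intro u _; positivity
  linarith

lemma Kc_nonneg (k : ℝ) : 0 ≤ Kc k := by
  apply intervalIntegral.integral_nonneg zero_le_one
  intro u _; positivity

lemma Pic_nonneg {μ k : ℝ} (hμ : μ ∈ Set.Ioo (0:ℝ) 1) : 0 ≤ Pic μ k := by
  apply intervalIntegral.integral_nonneg zero_le_one
  intro u hu; exact fP_nonneg hμ hu

lemma Kc_prod {k : ℝ} (hk : k ∈ Set.Ioo (0:ℝ) 1) : (1 - k) * Kc k ≤ 2 * Real.sqrt (1 - k) := by
  have h0 : (0:ℝ) < 1 - k := by linarith [hk.2]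
  have h1 : Real.sqrt (1 - k) ≤ Real.sqrt (1 - k ^ 2) :=
    Real.sqrt_le_sqrt (by nlinarith [hk.1])
  have h2 : (Real.sqrt (1 - k ^ 2))⁻¹ ≤ (Real.sqrt (1 - k))⁻¹ :=
    inv_anti₀ (Real.sqrt_pos.mpr h0) h1
  calc (1 - k) * Kc k ≤ (1 - k) * (2 * (Real.sqrt (1 - k ^ 2))⁻¹) := by
        apply mul_le_mul_of_nonneg_left (Kc_le ⟨by linarith [hk.1], hk.2⟩) h0.le
    _ ≤ (1 - k) * (2 * (Real.sqrt (1 - k))⁻¹) := by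
        apply mul_le_mul_of_nonneg_left (by linarith) h0.le
    _ = 2 * ((1 - k) / Real.sqrt (1 - k)) := by ring
    _ = 2 * Real.sqrt (1 - k) := by rw [Real.div_sqrt]

lemma Pic_prod {μ k : ℝ} (hμ : μ ∈ Set.Ioo (0:ℝ) 1) (hk : k ∈ Set.Ioo (-1:ℝ) 1) :
    (1 - μ) * Pic μ k ≤ 4 * (Real.sqrt (1 - k ^ 2))⁻¹ * Real.sqrt (Real.sqrt (1 - μ)) := by
  have h0 : (0:ℝ) < 1 - μ := by linarith [hμ.2]
  have key : (1 - μ) * (1 - μ) ^ (-(3/4):ℝ) = Real.sqrt (Real.sqrt (1 - μ)) := by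
    rw [Real.sqrt_eq_rpow, Real.sqrt_eq_rpow, ← Real.rpow_mul h0.le]
    nth_rewrite 1 [← Real.rpow_one (1 - μ)]
    rw [← Real.rpow_add h0]
    norm_num
  calc (1 - μ) * Pic μ k
      ≤ (1 - μ) * (4 * ((1 - μ) ^ (-(3/4):ℝ) * (Real.sqrt (1 - k ^ 2))⁻¹)) :=
        mul_le_mul_of_nonneg_left (Pic_le hμ hk) h0.le
    _ = 4 * (Real.sqrt (1 - k ^ 2))⁻¹ * ((1 - μ) * (1 - μ) ^ (-(3/4):ℝ)) := by ring
    _ = 4 * (Real.sqrt (1 - k ^ 2))⁻¹ * Real.sqrt (Real.sqrt (1 - μ)) := by rw [key]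

lemma tendsto_neg_log_div_two :
    Tendsto (fun x : ℝ => -Real.log (1 - x) / 2) (𝓝[<] (1:ℝ)) atTop := by
  have h1 : Tendsto (fun x : ℝ => 1 - x) (𝓝[<] (1:ℝ)) (𝓝[>] (0:ℝ)) := by
    apply tendsto_nhdsWithin_of_tendsto_nhds_of_eventually_within
    · exact ((continuous_const.sub continuous_id).tendsto' 1 0 (by norm_num)).mono_left
        nhdsWithin_le_nhds
    · filter_upwards [eventually_mem_nhdsWithin] with x hx
      simpa using sub_pos.mpr (Set.mem_Iio.mp hx)
  have h2 : Tendsto (fun x : ℝ => Real.log (1 - x)) (𝓝[<] (1:ℝ)) atBot :=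
    Real.tendsto_log_nhdsGT_zero.comp h1
  exact (tendsto_neg_atBot_atTop.comp h2).atTop_div_const (by norm_num)

lemma eventually_ne_zero {p : Polynomial ℝ} (hp : p ≠ 0) {a : ℝ} (ha : a < 1) :
    ∀ᶠ x in 𝓝[Set.Ioo a 1] (1:ℝ), p.eval x ≠ 0 := by
  have hfin : ({x : ℝ | p.IsRoot x} \ {1}).Finite :=
    (Polynomial.finite_setOf_isRoot hp).diff
  have hop : IsOpen ({x : ℝ | p.IsRoot x} \ {1})ᶜ := hfin.isClosed.isOpen_compl
  have h1 : (1:ℝ) ∈ ({x : ℝ | p.IsRoot x} \ {1})ᶜ := by simp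
  have hev : ∀ᶠ x in 𝓝 (1:ℝ), x ∈ ({x : ℝ | p.IsRoot x} \ {1})ᶜ :=
    hop.eventually_mem h1
  filter_upwards [hev.filter_mono nhdsWithin_le_nhds, eventually_mem_nhdsWithin] with x hx1 hx2
  intro hroot
  exact hx1 ⟨hroot, ne_of_lt hx2.2⟩

lemma aux_poly2 {a : ℝ} (ha : a < 1) (p q : Polynomial ℝ) (f g : ℝ → ℝ)
    (hev : ∀ᶠ x in 𝓝[Set.Ioo a 1] (1:ℝ), p.eval x * f x + q.eval x * g x = 0)
    (hf1 : Tendsto f (𝓝[Set.Ioo a 1] (1:ℝ)) atTop)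
    (hf2 : Tendsto (fun x => (1 - x) * f x) (𝓝[Set.Ioo a 1] (1:ℝ)) (𝓝 0))
    (hg : ∀ᶠ x in 𝓝[Set.Ioo a 1] (1:ℝ), g x ∈ Set.Icc (1/2 : ℝ) 2) :
    p = 0 ∧ q = 0 := by
  haveI : (𝓝[Set.Ioo a 1] (1:ℝ)).NeBot := right_nhdsWithin_Ioo_neBot ha
  set l := 𝓝[Set.Ioo a 1] (1:ℝ) with hl
  have hxlt : ∀ᶠ x in l, x ∈ Set.Ioo a 1 := eventually_mem_nhdsWithin
  have hxne : ∀ᶠ x in l, x - 1 ≠ 0 := by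
    filter_upwards [hxlt] with x hx; exact sub_ne_zero.mpr (ne_of_lt hx.2)
  have hcont : ∀ r : Polynomial ℝ, Tendsto (fun x => r.eval x) l (𝓝 (r.eval 1)) :=
    fun r => (r.continuous.tendsto 1).mono_left nhdsWithin_le_nhds
  have hp : p = 0 := by
    by_contra hp0
    have hpne := eventually_ne_zero hp0 ha
    by_cases hq0 : q = 0
    · have hf0 : ∀ᶠ x in l, f x = 0 := by
        filter_upwards [hev, hpne] with x h1 h2
        rw [hq0] at h1
        simp only [Polynomial.eval_zero, zero_mul, add_zero] at h1
        exact (mul_eq_zero.mp h1).resolve_left h2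
      obtain ⟨x, hx1, hx2⟩ := (hf0.and (hf1.eventually_ge_atTop 1)).exists
      rw [hx1] at hx2; norm_num at hx2
    · obtain ⟨u, hu, hund⟩ := p.exists_eq_pow_rootMultiplicity_mul_and_not_dvd hp0 1
      obtain ⟨v, hv, hvnd⟩ := q.exists_eq_pow_rootMultiplicity_mul_and_not_dvd hq0 1
      set m := p.rootMultiplicity 1 with hm
      set n := q.rootMultiplicity 1 with hn
      have hu1 : u.eval 1 ≠ 0 := fun h => hund (Polynomial.dvd_iff_isRoot.mpr h)
      have hv1 : v.eval 1 ≠ 0 := fun h => hvnd (Polynomial.dvd_iff_isRoot.mpr h)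
      have hune : ∀ᶠ x in l, u.eval x ≠ 0 :=
        eventually_ne_zero (fun h => hu1 (by rw [h]; simp)) ha
      have hvne : ∀ᶠ x in l, v.eval x ≠ 0 :=
        eventually_ne_zero (fun h => hv1 (by rw [h]; simp)) ha
      have hid : ∀ᶠ x in l,
          (x - 1) ^ m * u.eval x * f x + (x - 1) ^ n * v.eval x * g x = 0 := by
        filter_upwards [hev] with x h1
        rw [hu, hv] at h1
        simpa using h1
      rcases le_or_gt m n with hmn | hmn
      · -- f is eventually bounded; contradiction with f → ∞
        have key : ∀ᶠ x in l, f x = -((x - 1) ^ (n - m) * v.eval x * g x) / u.eval x := by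
          filter_upwards [hid, hxne, hune] with x h1 h2 h3
          rw [eq_div_iff h3]
          have hcan : (x - 1) ^ m * (u.eval x * f x)
              = (x - 1) ^ m * (-((x - 1) ^ (n - m) * v.eval x * g x)) := by
            rw [show n = m + (n - m) by omega, pow_add] at h1
            linear_combination h1
          have h4 := mul_left_cancel₀ (pow_ne_zero m h2) hcan
          linear_combination h4
        have habs : ∀ᶠ x in l, |f x| ≤ (|v.eval x| * 2) / (|u.eval x|) := by
          filter_upwards [key, hune,
            (eventually_abs_sub_lt (1:ℝ) one_pos).filter_mono nhdsWithin_le_nhds, hg]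
            with x h1 h2 h3 h4
          rw [h1, abs_div, abs_neg, abs_mul, abs_mul, abs_pow]
          apply div_le_div_of_nonneg_right ?_ (abs_pos.mpr h2).le
          have e1 : |x - 1| ^ (n - m) ≤ 1 := pow_le_one₀ (abs_nonneg _) h3.le
          have e2 : |g x| ≤ 2 := by
            rw [abs_of_nonneg (by linarith [h4.1])]; exact h4.2
          calc |x - 1| ^ (n - m) * |v.eval x| * |g x|
              ≤ 1 * |v.eval x| * 2 := by
                apply mul_le_mul (mul_le_mul_of_nonneg_right e1 (abs_nonneg _)) e2
                  (abs_nonneg _)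
                exact mul_nonneg zero_le_one (abs_nonneg _)
            _ = |v.eval x| * 2 := by ring
        have hB : Tendsto (fun x => (|v.eval x| * 2) / (|u.eval x|)) l
            (𝓝 ((|v.eval 1| * 2) / (|u.eval 1|))) :=
          Tendsto.div (((hcont v).abs).mul_const 2) ((hcont u).abs) (abs_ne_zero.mpr hu1)
        have hBle := hB.eventually (eventually_le_nhds (lt_add_one _))
        have hfge := hf1.eventually_ge_atTop ((|v.eval 1| * 2) / (|u.eval 1|) + 2)
        obtain ⟨x, hx1, hx2, hx3⟩ := (habs.and (hBle.and hfge)).exists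
        have : f x ≤ |f x| := le_abs_self _
        linarith
      · -- n < m : g → 0, contradiction with g ≥ 1/2
        have key : ∀ᶠ x in l,
            g x = -((x - 1) ^ (m - n - 1) * u.eval x * ((x - 1) * f x)) / v.eval x := by
          filter_upwards [hid, hxne, hvne] with x h1 h2 h3
          rw [eq_div_iff h3]
          have hcan : (x - 1) ^ n * (v.eval x * g x)
              = (x - 1) ^ n * (-((x - 1) ^ (m - n - 1) * u.eval x * ((x - 1) * f x))) := by
            rw [show m = n + ((m - n - 1) + 1) by omega, pow_add] at h1
            linear_combination h1
          have h4 := mul_left_cancel₀ (pow_ne_zero n h2) hcan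
          linear_combination h4
        have h01 : Tendsto (fun x => (x - 1) * f x) l (𝓝 0) := by
          have he : (fun x : ℝ => (x - 1) * f x) = fun x => -((1 - x) * f x) := by
            funext x; ring
          rw [he]
          simpa using hf2.neg
        have hgl : Tendsto g l
            (𝓝 (-(((1:ℝ) - 1) ^ (m - n - 1) * u.eval 1 * 0) / v.eval 1)) := by
          apply Tendsto.congr' (key.mono fun x hx => hx.symm)
          apply Tendsto.div _ (hcont v) hv1
          apply Tendsto.neg
          exact ((((tendsto_id.mono_left nhdsWithin_le_nhds).sub_const 1).pow _).mul
            (hcont u)).mul h01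
        have hz : (-(((1:ℝ) - 1) ^ (m - n - 1) * u.eval 1 * 0) / v.eval 1) = 0 := by simp
        rw [hz] at hgl
        have := hgl.eventually (eventually_lt_nhds (by norm_num : (0:ℝ) < 1/4))
        obtain ⟨x, hx1, hx2⟩ := (hg.and this).exists
        linarith [hx1.1]
  have hq : q = 0 := by
    by_contra hq0
    have hqne := eventually_ne_zero hq0 ha
    have : ∀ᶠ x in l, g x = 0 := by
      filter_upwards [hev, hqne] with x h1 h2
      rw [hp] at h1
      simp only [Polynomial.eval_zero, zero_mul, zero_add] at h1
      exact (mul_eq_zero.mp h1).resolve_left h2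
    obtain ⟨x, hx1, hx2⟩ := (this.and hg).exists
    rw [hx1] at hx2
    linarith [hx2.1]
  exact ⟨hp, hq⟩

noncomputable def pe0 (P : MvPolynomial (Fin 2) ℝ) (k : ℝ) : Polynomial ℝ :=
  MvPolynomial.aeval (fun i : Fin 2 => if i = 0 then Polynomial.X else Polynomial.C k) P

noncomputable def pe1 (P : MvPolynomial (Fin 2) ℝ) (μ : ℝ) : Polynomial ℝ :=
  MvPolynomial.aeval (fun i : Fin 2 => if i = 0 then Polynomial.C μ else Polynomial.X) P

lemma pe0_eval (P : MvPolynomial (Fin 2) ℝ) (k μ : ℝ) :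
    (pe0 P k).eval μ = MvPolynomial.eval ![μ, k] P := by
  unfold pe0
  induction P using MvPolynomial.induction_on with
  | C a => simp
  | add p q hp hq => simp [hp, hq]
  | mul_X p i hp =>
    rw [map_mul, map_mul, Polynomial.eval_mul, hp]
    congr 1
    fin_cases i <;> simp

lemma pe1_eval (P : MvPolynomial (Fin 2) ℝ) (μ k : ℝ) :
    (pe1 P μ).eval k = MvPolynomial.eval ![μ, k] P := by
  unfold pe1
  induction P using MvPolynomial.induction_on with
  | C a => simp
  | add p q hp hq => simp [hp, hq]
  | mul_X p i hp =>
    rw [map_mul, map_mul, Polynomial.eval_mul, hp]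
    congr 1
    fin_cases i <;> simp

lemma mv_zero (P : MvPolynomial (Fin 2) ℝ) {S T : Set ℝ} (hS : S.Infinite) (hT : T.Infinite)
    (h : ∀ s ∈ S, ∀ t ∈ T, MvPolynomial.eval ![s, t] P = 0) : P = 0 := by
  have step1 : ∀ s ∈ S, ∀ t : ℝ, MvPolynomial.eval ![s, t] P = 0 := by
    intro s hs t
    have hz : pe1 P s = 0 := by
      apply Polynomial.eq_zero_of_infinite_isRoot
      apply hT.mono
      intro x hx
      simp only [Set.mem_setOf_eq, Polynomial.IsRoot, pe1_eval]
      exact h s hs x hx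
    rw [← pe1_eval, hz, Polynomial.eval_zero]
  have step2 : ∀ s t : ℝ, MvPolynomial.eval ![s, t] P = 0 := by
    intro s t
    have hz : pe0 P t = 0 := by
      apply Polynomial.eq_zero_of_infinite_isRoot
      apply hS.mono
      intro x hx
      simp only [Set.mem_setOf_eq, Polynomial.IsRoot, pe0_eval]
      exact step1 x hx t
    rw [← pe0_eval, hz, Polynomial.eval_zero]
  apply MvPolynomial.funext
  intro x
  have : x = ![x 0, x 1] := by
    funext i; fin_cases i <;> simp
  rw [this]
  simp [step2]

/-- `K(k)`, `E(k)` and `Π(μ,k)` are linearly independent with respect to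
two-variable polynomial (equivalently, rational function) coefficients in `(μ,k)`. -/
theorem complete_integrals_linear_independent_two_vars
    (P₁ P₂ P₃ : MvPolynomial (Fin 2) ℝ)
    (h : ∀ μ k : ℝ, μ ∈ Set.Ioo (0 : ℝ) 1 → k ∈ Set.Ioo (-1 : ℝ) 1 → μ ≠ k ^ 2 →
      MvPolynomial.eval ![μ, k] P₁ * Kc k
        + MvPolynomial.eval ![μ, k] P₂ * Ec k
        + MvPolynomial.eval ![μ, k] P₃ * Pic μ k = 0) :
    P₁ = 0 ∧ P₂ = 0 ∧ P₃ = 0 := by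
  have hIoo : (Set.Ioo (-1:ℝ) 1).Infinite := (Set.Ioo_infinite (by norm_num))
  have hIoo01 : (Set.Ioo (0:ℝ) 1).Infinite := (Set.Ioo_infinite (by norm_num))
  -- Stage 1 : P₃ = 0
  have stage1 : ∀ k ∈ Set.Ioo (-1:ℝ) 1, pe0 P₃ k = 0 := by
    intro k hk
    have hk2 : k ^ 2 < 1 := by nlinarith [hk.1, hk.2]
    set a : ℝ := max (k ^ 2) (1/2) with hadef
    have ha : a < 1 := by
      apply max_lt hk2 (by norm_num)
    have hmem : ∀ μ ∈ Set.Ioo a 1, μ ∈ Set.Ioo (0:ℝ) 1 ∧ μ ≠ k ^ 2 := by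
      intro μ hμ
      have h1 : (1:ℝ)/2 ≤ a := le_max_right _ _
      have h2 : k ^ 2 ≤ a := le_max_left _ _
      exact ⟨⟨by linarith [hμ.1], hμ.2⟩, by intro hc; rw [hc] at hμ; linarith [hμ.1]⟩
    have main := aux_poly2 ha (pe0 P₃ k)
      (Polynomial.C (Kc k) * pe0 P₁ k + Polynomial.C (Ec k) * pe0 P₂ k)
      (fun μ => Pic μ k) (fun _ => (1:ℝ)) ?_ ?_ ?_ ?_
    · exact main.1
    · filter_upwards [eventually_mem_nhdsWithin] with μ hμ
      obtain ⟨hμ01, hμk⟩ := hmem μ hμ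
      have hh := h μ k hμ01 hk hμk
      simp only [Polynomial.eval_neg, Polynomial.eval_add, Polynomial.eval_mul,
        Polynomial.eval_C, pe0_eval]
      linear_combination hh
    · apply tendsto_atTop_mono' _ ?_
        ((tendsto_neg_log_div_two).mono_left (nhdsWithin_mono 1 Set.Ioo_subset_Iio_self))
      filter_upwards [eventually_mem_nhdsWithin] with μ hμ
      exact Pic_ge (hmem μ hμ).1 hk
    · have hup : Tendsto (fun μ : ℝ => 4 * (Real.sqrt (1 - k ^ 2))⁻¹
          * Real.sqrt (Real.sqrt (1 - μ))) (𝓝[Set.Ioo a 1] (1:ℝ)) (𝓝 0) := by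
        have hc : Tendsto (fun μ : ℝ => Real.sqrt (Real.sqrt (1 - μ))) (𝓝 (1:ℝ)) (𝓝 0) := by
          have hcont2 : Continuous fun μ : ℝ => Real.sqrt (Real.sqrt (1 - μ)) := by fun_prop
          exact hcont2.tendsto' 1 0 (by simp)
        have := (hc.mono_left (nhdsWithin_le_nhds (s := Set.Ioo a 1))).const_mul
          (4 * (Real.sqrt (1 - k ^ 2))⁻¹)
        simpa using this
      apply tendsto_of_tendsto_of_tendsto_of_le_of_le' tendsto_const_nhds hup
      · filter_upwards [eventually_mem_nhdsWithin] with μ hμ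
        exact mul_nonneg (by linarith [hμ.2]) (Pic_nonneg (hmem μ hμ).1)
      · filter_upwards [eventually_mem_nhdsWithin] with μ hμ
        exact Pic_prod (hmem μ hμ).1 hk
    · filter_upwards with x
      constructor <;> norm_num
  have hP3 : P₃ = 0 := by
    apply mv_zero P₃ (Set.infinite_univ (α := ℝ)) hIoo
    intro s _ t ht
    rw [← pe0_eval, stage1 t ht, Polynomial.eval_zero]
  -- Stage 2 : P₁ = P₂ = 0
  have h2 : ∀ μ k : ℝ, μ ∈ Set.Ioo (0 : ℝ) 1 → k ∈ Set.Ioo (-1 : ℝ) 1 → μ ≠ k ^ 2 →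
      MvPolynomial.eval ![μ, k] P₁ * Kc k + MvPolynomial.eval ![μ, k] P₂ * Ec k = 0 := by
    intro μ k h1 hk hne
    have := h μ k h1 hk hne
    rw [hP3] at this
    simpa using this
  have stage2 : ∀ μ ∈ Set.Ioo (0:ℝ) 1, pe1 P₁ μ = 0 ∧ pe1 P₂ μ = 0 := by
    intro μ hμ
    have hsq : Real.sqrt μ < 1 := by
      rw [show (1:ℝ) = Real.sqrt 1 by simp]
      exact Real.sqrt_lt_sqrt hμ.1.le hμ.2
    set b : ℝ := max (Real.sqrt μ) (1/2) with hbdef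
    have hb : b < 1 := max_lt hsq (by norm_num)
    have hmem : ∀ k ∈ Set.Ioo b 1, k ∈ Set.Ioo (0:ℝ) 1 ∧ k ∈ Set.Ioo (-1:ℝ) 1 ∧ μ ≠ k ^ 2 := by
      intro k hk
      have h1 : (1:ℝ)/2 ≤ b := le_max_right _ _
      have h2 : Real.sqrt μ ≤ b := le_max_left _ _
      have hk0 : 0 < k := by linarith [hk.1]
      have hlt : μ < k ^ 2 := by
        have := Real.sq_sqrt hμ.1.le
        nlinarith [hk.1, Real.sqrt_nonneg μ]
      exact ⟨⟨hk0, hk.2⟩, ⟨by linarith, hk.2⟩, ne_of_lt hlt⟩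
    have main := aux_poly2 hb (pe1 P₁ μ) (pe1 P₂ μ) Kc Ec ?_ ?_ ?_ ?_
    · exact main
    · filter_upwards [eventually_mem_nhdsWithin] with k hk
      obtain ⟨_, hk1, hne⟩ := hmem k hk
      have hh := h2 μ k hμ hk1 hne
      simpa only [pe1_eval] using hh
    · apply tendsto_atTop_mono' _ ?_
        ((tendsto_neg_log_div_two).mono_left (nhdsWithin_mono 1 Set.Ioo_subset_Iio_self))
      filter_upwards [eventually_mem_nhdsWithin] with k hk
      exact Kc_ge (hmem k hk).1
    · have hup : Tendsto (fun k : ℝ => 2 * Real.sqrt (1 - k)) (𝓝[Set.Ioo b 1] (1:ℝ)) (𝓝 0) := by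
        have hc : Tendsto (fun k : ℝ => Real.sqrt (1 - k)) (𝓝 (1:ℝ)) (𝓝 0) := by
          have hcont2 : Continuous fun k : ℝ => Real.sqrt (1 - k) := by fun_prop
          exact hcont2.tendsto' 1 0 (by simp)
        have := (hc.mono_left (nhdsWithin_le_nhds (s := Set.Ioo b 1))).const_mul (2:ℝ)
        simpa using this
      apply tendsto_of_tendsto_of_tendsto_of_le_of_le' tendsto_const_nhds hup
      · filter_upwards [eventually_mem_nhdsWithin] with k hk
        exact mul_nonneg (by linarith [hk.2]) (Kc_nonneg k)
      · filter_upwards [eventually_mem_nhdsWithin] with k hk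
        exact Kc_prod (hmem k hk).1
    · filter_upwards [eventually_mem_nhdsWithin] with k hk
      exact ⟨Ec_ge (hmem k hk).2.1, Ec_le (hmem k hk).2.1⟩
  refine ⟨?_, ?_, hP3⟩
  · apply mv_zero P₁ hIoo01 (Set.infinite_univ (α := ℝ))
    intro s hs t _
    rw [← pe1_eval, (stage2 s hs).1, Polynomial.eval_zero]
  · apply mv_zero P₂ hIoo01 (Set.infinite_univ (α := ℝ))
    intro s hs t _
    rw [← pe1_eval, (stage2 s hs).2, Polynomial.eval_zero]
end

section
/- Let i, j be natural numbers with j ≥ 1, and for u ∈ (−1,1) define F(u) = (j/(i+1))·∫_{(1−u)/2}^{(1+u)/2} x^{i+1}(1−x)^{j−1} dx − ∫_{(1−u)/2}^{(1+u)/2} x^{i}(1−x)^{j} dx. Then F is an odd polynomial function of u (i.e., F agrees on (−1,1) with a polynomial having only odd-degree terms) of degree at most i + j + (1+(−1)^{i+j})/2 (that is, at most i+j+1 if i+j is even and at most i+j if i+j is odd); moreover, if j = i+1 then F is identically zero. -/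
/-- The function `F(u)` of Lemma 3.1. -/
noncomputable def Fint (i j : ℕ) (u : ℝ) : ℝ :=
  ((j : ℝ) / (i + 1)) *
      (∫ x in ((1 - u) / 2)..((1 + u) / 2), x ^ (i + 1) * (1 - x) ^ (j - 1))
    - ∫ x in ((1 - u) / 2)..((1 + u) / 2), x ^ i * (1 - x) ^ j

open Polynomial


noncomputable def myAntideriv (p : ℝ[X]) : ℝ[X] :=
  p.sum fun n a => C (a / (n + 1)) * X ^ (n + 1)

lemma derivative_myAntideriv (p : ℝ[X]) : derivative (myAntideriv p) = p := by
  unfold myAntideriv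
  rw [Polynomial.sum, map_sum]
  conv_rhs => rw [← p.sum_C_mul_X_pow_eq, Polynomial.sum]
  refine Finset.sum_congr rfl fun n hn => ?_
  rw [derivative_C_mul, derivative_X_pow, Nat.add_sub_cancel, ← mul_assoc]
  rw [← C_mul]
  congr 1
  push_cast
  field_simp

lemma natDegree_myAntideriv_le (p : ℝ[X]) : (myAntideriv p).natDegree ≤ p.natDegree + 1 := by
  unfold myAntideriv
  rw [Polynomial.sum]
  refine (Polynomial.natDegree_sum_le _ _).trans ?_
  rw [Finset.fold_max_le]
  refine ⟨Nat.zero_le _, fun n hn => ?_⟩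
  refine (Polynomial.natDegree_C_mul_le _ _).trans ?_
  refine (Polynomial.natDegree_X_pow_le _).trans ?_
  exact Nat.succ_le_succ (Polynomial.le_natDegree_of_mem_supp n hn)

lemma integral_poly (p : ℝ[X]) (a b : ℝ) :
    ∫ x in a..b, p.eval x = (myAntideriv p).eval b - (myAntideriv p).eval a := by
  have h : ∀ x ∈ Set.uIcc a b, HasDerivAt (fun y => (myAntideriv p).eval y) (p.eval x) x := by
    intro x _
    simpa [derivative_myAntideriv] using (myAntideriv p).hasDerivAt x
  exact intervalIntegral.integral_eq_sub_of_hasDerivAt h (p.continuous.intervalIntegrable a b)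

lemma coeff_comp_neg_X (p : ℝ[X]) (d : ℕ) :
    (p.comp (-X)).coeff d = (-1) ^ d * p.coeff d := by
  induction p using Polynomial.induction_on' with
  | add p q hp hq => simp [add_comp, hp, hq, mul_add]
  | monomial n a =>
    have hc : ((-1 : ℝ[X])) ^ n = C ((-1) ^ n) := by rw [C_pow]; norm_num
    rw [monomial_comp, neg_pow, hc, coeff_C_mul, coeff_C_mul, coeff_X_pow, coeff_monomial]
    rcases eq_or_ne d n with rfl | h
    · simp [mul_comm]
    · simp [h, if_neg (Ne.symm h)]

/-- `F` is an odd polynomial function of `u` of degree at most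
`i + j + (1 + (-1)^(i+j))/2`, and `F ≡ 0` when `j = i + 1`. -/
theorem F_odd_polynomial (i j : ℕ) (hj : 1 ≤ j) :
    (∃ P : Polynomial ℝ,
      (∀ u ∈ Set.Ioo (-1 : ℝ) 1, Fint i j u = P.eval u) ∧
      (∀ d : ℕ, Even d → P.coeff d = 0) ∧
      P.natDegree ≤ i + j + (if Even (i + j) then 1 else 0)) ∧
    (j = i + 1 → ∀ u ∈ Set.Ioo (-1 : ℝ) 1, Fint i j u = 0) := by
  constructor
  · set q1 : ℝ[X] := X ^ (i + 1) * (1 - X) ^ (j - 1) with hq1def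
    set q2 : ℝ[X] := X ^ i * (1 - X) ^ j with hq2def
    set R : ℝ[X] := C ((j : ℝ) / (i + 1)) * myAntideriv q1 - myAntideriv q2 with hRdef
    set Lp : ℝ[X] := C (1/2) * (1 + X) with hLpdef
    set Lm : ℝ[X] := C (1/2) * (1 - X) with hLmdef
    set P : ℝ[X] := R.comp Lp - R.comp Lm with hPdef
    have hI : ∀ u : ℝ, Fint i j u = P.eval u := by
      intro u
      have e1 : (∫ x in ((1 - u) / 2)..((1 + u) / 2), x ^ (i + 1) * (1 - x) ^ (j - 1))
          = (myAntideriv q1).eval ((1 + u) / 2) - (myAntideriv q1).eval ((1 - u) / 2) := by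
        rw [← integral_poly q1]
        simp [hq1def]
      have e2 : (∫ x in ((1 - u) / 2)..((1 + u) / 2), x ^ i * (1 - x) ^ j)
          = (myAntideriv q2).eval ((1 + u) / 2) - (myAntideriv q2).eval ((1 - u) / 2) := by
        rw [← integral_poly q2]
        simp [hq2def]
      rw [Fint, e1, e2, hPdef, hRdef, hLpdef, hLmdef]
      simp only [eval_sub, eval_comp, eval_mul, eval_add, eval_one, eval_C, eval_X]
      ring
    have hsymm : ∀ u : ℝ, Fint i j (-u) = - Fint i j u := by
      intro u
      have ha : (1 - -u) / 2 = (1 + u) / 2 := by ring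
      have hb : (1 + -u) / 2 = (1 - u) / 2 := by ring
      rw [Fint, Fint, ha, hb,
        intervalIntegral.integral_symm ((1 - u) / 2) ((1 + u) / 2),
        intervalIntegral.integral_symm ((1 - u) / 2) ((1 + u) / 2)]
      ring
    have hcomp : P.comp (-X) = -P := by
      apply Polynomial.funext
      intro x
      have : eval x (P.comp (-X)) = P.eval (-x) := by simp [eval_comp]
      rw [this, ← hI (-x), hsymm, hI]
      simp
    have hcoeff : ∀ d : ℕ, Even d → P.coeff d = 0 := by
      intro d hd
      have h := congrArg (fun Q : ℝ[X] => Q.coeff d) hcomp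
      simp only [coeff_comp_neg_X, coeff_neg, hd.neg_one_pow, one_mul] at h
      linarith
    have h1X : (1 - X : ℝ[X]).natDegree ≤ 1 := by
      rw [show (1 - X : ℝ[X]) = -(X - C 1) by rw [C_1]; ring, natDegree_neg, natDegree_X_sub_C]
    have hq1 : q1.natDegree ≤ i + j := by
      refine natDegree_mul_le.trans ?_
      have h1 : (X ^ (i + 1) : ℝ[X]).natDegree ≤ i + 1 := natDegree_X_pow_le _
      have h2 : ((1 - X : ℝ[X]) ^ (j - 1)).natDegree ≤ (j - 1) * 1 :=
        natDegree_pow_le.trans (Nat.mul_le_mul_left _ h1X)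
      omega
    have hq2 : q2.natDegree ≤ i + j := by
      refine natDegree_mul_le.trans ?_
      have h1 : (X ^ i : ℝ[X]).natDegree ≤ i := natDegree_X_pow_le _
      have h2 : ((1 - X : ℝ[X]) ^ j).natDegree ≤ j * 1 :=
        natDegree_pow_le.trans (Nat.mul_le_mul_left _ h1X)
      omega
    have hR : R.natDegree ≤ i + j + 1 := by
      refine (natDegree_sub_le _ _).trans (max_le ?_ ?_)
      · exact (natDegree_C_mul_le _ _).trans
          ((natDegree_myAntideriv_le _).trans (by omega))
      · exact (natDegree_myAntideriv_le _).trans (by omega)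
    have hLp : Lp.natDegree ≤ 1 := by
      refine (natDegree_C_mul_le _ _).trans ?_
      rw [show (1 + X : ℝ[X]) = X - C (-1) by rw [map_neg, C_1, sub_neg_eq_add]; ring, natDegree_X_sub_C]
    have hLm : Lm.natDegree ≤ 1 := (natDegree_C_mul_le _ _).trans h1X
    have hP : P.natDegree ≤ i + j + 1 := by
      refine (natDegree_sub_le _ _).trans (max_le ?_ ?_)
      · exact natDegree_comp_le.trans ((Nat.mul_le_mul hR hLp).trans (by omega))
      · exact natDegree_comp_le.trans ((Nat.mul_le_mul hR hLm).trans (by omega))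
    refine ⟨P, fun u _ => hI u, hcoeff, ?_⟩
    by_cases h : Even (i + j)
    · simpa [h] using hP
    · rw [if_neg h, add_zero]
      rw [Polynomial.natDegree_le_iff_coeff_eq_zero]
      intro m hm
      rcases eq_or_lt_of_le (Nat.succ_le_of_lt hm) with hmeq | hmlt
      · rw [← hmeq]
        exact hcoeff _ (Nat.even_add_one.mpr h)
      · exact coeff_eq_zero_of_natDegree_lt (lt_of_le_of_lt hP hmlt)
  · intro hji u _
    subst hji
    have hc : (((i + 1 : ℕ) : ℝ)) / ((i : ℝ) + 1) = 1 := by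
      push_cast
      field_simp
    rw [Fint, hc, one_mul, Nat.add_sub_cancel]
    have hint1 : IntervalIntegrable (fun x : ℝ => x ^ (i + 1) * (1 - x) ^ i)
        MeasureTheory.volume ((1 - u) / 2) ((1 + u) / 2) := by
      apply Continuous.intervalIntegrable
      fun_prop
    have hint2 : IntervalIntegrable (fun x : ℝ => x ^ i * (1 - x) ^ (i + 1))
        MeasureTheory.volume ((1 - u) / 2) ((1 + u) / 2) := by
      apply Continuous.intervalIntegrable
      fun_prop
    have key : (∫ x in ((1 - u) / 2)..((1 + u) / 2),
        (x ^ i * (1 - x) ^ (i + 1) - x ^ (i + 1) * (1 - x) ^ i)) = 0 := by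
      have hF : ∀ x ∈ Set.uIcc ((1 - u) / 2) ((1 + u) / 2),
          HasDerivAt (fun y : ℝ => (y * (1 - y)) ^ (i + 1) / ((i : ℝ) + 1))
            (x ^ i * (1 - x) ^ (i + 1) - x ^ (i + 1) * (1 - x) ^ i) x := by
        intro x _
        have h1 : HasDerivAt (fun y : ℝ => y * (1 - y)) (1 - 2 * x) x := by
          have := (hasDerivAt_id x).mul ((hasDerivAt_const x (1 : ℝ)).sub (hasDerivAt_id x))
          refine this.congr_deriv ?_
          simp
          ring
        have h2 := (h1.pow (i + 1)).div_const ((i : ℝ) + 1)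
        refine h2.congr_deriv ?_
        have hne : ((i : ℝ) + 1) ≠ 0 := by positivity
        simp only [Nat.add_sub_cancel, mul_pow]
        push_cast
        field_simp
        ring
      have hcont : IntervalIntegrable
          (fun x : ℝ => x ^ i * (1 - x) ^ (i + 1) - x ^ (i + 1) * (1 - x) ^ i)
          MeasureTheory.volume ((1 - u) / 2) ((1 + u) / 2) := by
        apply Continuous.intervalIntegrable
        fun_prop
      rw [intervalIntegral.integral_eq_sub_of_hasDerivAt hF hcont]
      have heq : ((1 + u) / 2) * (1 - (1 + u) / 2) = ((1 - u) / 2) * (1 - (1 - u) / 2) := by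
        ring
      rw [heq]
      ring
    rw [intervalIntegral.integral_sub hint2 hint1] at key
    linarith
end

section
/- Let u ∈ (0,1), set h = (1−u²)²/64, x₀ = (1−u)/2, x₁ = (1+u)/2, and k̃ = u/√(2−u²). Then ∫_{x₀}^{x₁} x·√(x⁴ − 2x³ + x² − 4h) dx = (√(2−u²)/12)·[ (u²−1)K(k̃) + E(k̃) ], and ∫_{x₀}^{x₁} x²·√(x⁴ − 2x³ + x² − 4h) dx = (√(2−u²)/40)·[ (u⁴−2u²+3)E(k̃) − (u⁴−4u²+3)K(k̃) ]. -/
open MeasureTheory intervalIntegral Real Set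

namespace EllAux

/-- The quartic under the square root. -/
def Q (c z : ℝ) : ℝ := (1 - z ^ 2) * (1 - c * z ^ 2)

noncomputable def A (c : ℝ) (j : ℕ) : ℝ := ∫ z in (0:ℝ)..1, z ^ j / Real.sqrt (Q c z)

lemma contQ (c : ℝ) : Continuous (Q c) := by unfold Q; continuity

lemma contS (c : ℝ) : Continuous (fun z => Real.sqrt (Q c z)) :=
  Real.continuous_sqrt.comp (contQ c)

lemma intgA {c : ℝ} (hc0 : 0 ≤ c) (hc1 : c < 1) (j : ℕ) :
    IntervalIntegrable (fun z => z ^ j / Real.sqrt (Q c z)) volume 0 1 := by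
  have hg : IntervalIntegrable
      (fun z : ℝ => (Real.sqrt (1 - c))⁻¹ * (1 - z) ^ (-(1/2) : ℝ)) volume 0 1 := by
    have h := (intervalIntegrable_rpow' (a := (0:ℝ)) (b := 1) (r := -(1/2))
      (by norm_num)).comp_sub_left 1
    simpa using (h.symm.const_mul ((Real.sqrt (1 - c))⁻¹))
  apply hg.mono_fun'
  · exact ((measurable_id.pow_const j).div
      (contS c).measurable).aestronglyMeasurable
  · rw [uIoc_of_le (by norm_num : (0:ℝ) ≤ 1)]
    filter_upwards [ae_restrict_mem measurableSet_Ioc] with z hz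
    obtain ⟨hz0, hz1⟩ := hz
    have h1 : (1 - z) ^ (-(1/2) : ℝ) = (Real.sqrt (1 - z))⁻¹ := by
      rw [Real.rpow_neg (by linarith), ← Real.sqrt_eq_rpow]
    have hz2 : z ^ 2 ≤ 1 := by nlinarith
    have hb1 : 0 ≤ 1 - c * z ^ 2 := by nlinarith [mul_le_one₀ hc1.le (sq_nonneg z) hz2]
    have hQn : Real.sqrt ((1 - c) * (1 - z)) ≤ Real.sqrt (Q c z) := by
      apply Real.sqrt_le_sqrt
      have hstep : 1 - c ≤ (1 + z) * (1 - c * z ^ 2) := by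
        nlinarith [mul_nonneg hz0.le hb1, mul_nonneg hc0 (sub_nonneg.2 hz2)]
      have h2 : (1 - c) * (1 - z) ≤ ((1 + z) * (1 - c * z ^ 2)) * (1 - z) :=
        mul_le_mul_of_nonneg_right hstep (by linarith)
      unfold Q
      nlinarith [h2]
    have hnorm : ‖z ^ j / Real.sqrt (Q c z)‖ = z ^ j / Real.sqrt (Q c z) := by
      rw [Real.norm_eq_abs, abs_of_nonneg]
      positivity
    rw [hnorm, h1]
    rcases eq_or_lt_of_le hz1 with h | h
    · subst h
      unfold Q
      norm_num
    · have hpos : 0 < Real.sqrt ((1 - c) * (1 - z)) := by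
        apply Real.sqrt_pos.2; nlinarith
      have hb : z ^ j / Real.sqrt (Q c z) ≤ 1 / Real.sqrt ((1 - c) * (1 - z)) := by
        apply div_le_div₀ (by norm_num) (pow_le_one₀ hz0.le hz1) hpos hQn
      calc z ^ j / Real.sqrt (Q c z) ≤ 1 / Real.sqrt ((1 - c) * (1 - z)) := hb
        _ = (Real.sqrt (1 - c))⁻¹ * (Real.sqrt (1 - z))⁻¹ := by
            rw [Real.sqrt_mul (by linarith), one_div, mul_inv]


lemma Q_pos {c : ℝ} (hc0 : 0 ≤ c) (hc1 : c < 1) {z : ℝ} (h0 : -1 < z) (h1 : z < 1) :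
    0 < Q c z := by
  have hz2 : z ^ 2 < 1 := by nlinarith
  have : c * z ^ 2 < 1 := by nlinarith [sq_nonneg z]
  unfold Q
  nlinarith

lemma rel {c : ℝ} (hc0 : 0 ≤ c) (hc1 : c < 1) (n : ℕ) :
    ((n:ℝ) + 1) * A c n - ((n:ℝ) + 2) * (1 + c) * A c (n + 2)
      + ((n:ℝ) + 3) * c * A c (n + 4) = 0 := by
  set f : ℝ → ℝ := fun z => z ^ (n + 1) * Real.sqrt (Q c z) with hf
  set f' : ℝ → ℝ := fun z => ((n:ℝ) + 1) * (z ^ n / Real.sqrt (Q c z))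
      - ((n:ℝ) + 2) * (1 + c) * (z ^ (n + 2) / Real.sqrt (Q c z))
      + ((n:ℝ) + 3) * c * (z ^ (n + 4) / Real.sqrt (Q c z)) with hf'
  have hint : IntervalIntegrable f' volume 0 1 :=
    ((((intgA hc0 hc1 n).const_mul _).sub ((intgA hc0 hc1 (n+2)).const_mul _)).add
      ((intgA hc0 hc1 (n+4)).const_mul _))
  have hftc : ∫ z in (0:ℝ)..1, f' z = f 1 - f 0 := by
    apply integral_eq_sub_of_hasDeriv_right_of_le (by norm_num)
    · exact ((continuous_pow _).mul (contS c)).continuousOn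
    · intro x hx
      obtain ⟨hx0, hx1⟩ := hx
      have hQpos : 0 < Q c x := Q_pos hc0 hc1 (by linarith) hx1
      have hs0 : Real.sqrt (Q c x) ≠ 0 := (Real.sqrt_pos.2 hQpos).ne'
      have hsq : Real.sqrt (Q c x) ^ 2 = Q c x := Real.sq_sqrt hQpos.le
      have hQx : HasDerivAt (Q c) (-2 * (1 + c) * x + 4 * c * x ^ 3) x := by
        have h1 : HasDerivAt (fun z : ℝ => (1 - z ^ 2) * (1 - c * z ^ 2))
            ((-(2 * x)) * (1 - c * x ^ 2) + (1 - x ^ 2) * (-(c * (2 * x)))) x := by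
          apply HasDerivAt.mul
          · simpa using ((hasDerivAt_pow 2 x).const_sub 1)
          · simpa using (((hasDerivAt_pow 2 x).const_mul c).const_sub 1)
        exact h1.congr_deriv (by ring)
      have hs : HasDerivAt (fun z => Real.sqrt (Q c z))
          ((-2 * (1 + c) * x + 4 * c * x ^ 3) / (2 * Real.sqrt (Q c x))) x :=
        hQx.sqrt hQpos.ne'
      have hp : HasDerivAt f
          ((((n:ℝ)+1) * x ^ n) * Real.sqrt (Q c x)
            + x ^ (n+1) * ((-2 * (1 + c) * x + 4 * c * x ^ 3) / (2 * Real.sqrt (Q c x)))) x := by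
        have := (hasDerivAt_pow (n+1) x).mul hs
        simp only [Nat.cast_add, Nat.cast_one, Nat.add_sub_cancel] at this
        exact this
      have heq : (((n:ℝ)+1) * x ^ n) * Real.sqrt (Q c x)
            + x ^ (n+1) * ((-2 * (1 + c) * x + 4 * c * x ^ 3) / (2 * Real.sqrt (Q c x)))
          = f' x := by
        rw [hf']
        have hQd : Q c x = (1 - x ^ 2) * (1 - c * x ^ 2) := rfl
        have hst : Real.sqrt (Q c x) * (Real.sqrt (Q c x))⁻¹ = 1 := mul_inv_cancel₀ hs0
        show _ = ((n:ℝ) + 1) * (x ^ n / Real.sqrt (Q c x))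
          - ((n:ℝ) + 2) * (1 + c) * (x ^ (n + 2) / Real.sqrt (Q c x))
          + ((n:ℝ) + 3) * c * (x ^ (n + 4) / Real.sqrt (Q c x))
        linear_combination (-(((n:ℝ)+1) * x ^ n * Real.sqrt (Q c x))) * hst
          + (((n:ℝ)+1) * x ^ n * (Real.sqrt (Q c x))⁻¹) * hsq
          + (((n:ℝ)+1) * x ^ n * (Real.sqrt (Q c x))⁻¹) * hQd
      exact (heq ▸ hp).hasDerivWithinAt
    · exact hint
  have hval : f 1 - f 0 = 0 := by
    rw [hf]
    simp [Q]
  have hsplit : ∫ z in (0:ℝ)..1, f' z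
      = ((n:ℝ) + 1) * A c n - ((n:ℝ) + 2) * (1 + c) * A c (n + 2)
        + ((n:ℝ) + 3) * c * A c (n + 4) := by
    rw [hf']
    rw [integral_add (((intgA hc0 hc1 n).const_mul _).sub ((intgA hc0 hc1 (n+2)).const_mul _))
      ((intgA hc0 hc1 (n+4)).const_mul _),
      integral_sub ((intgA hc0 hc1 n).const_mul _) ((intgA hc0 hc1 (n+2)).const_mul _),
      intervalIntegral.integral_const_mul, intervalIntegral.integral_const_mul, intervalIntegral.integral_const_mul]
    rfl
  rw [← hsplit, hftc, hval]


lemma Kc_eq (k : ℝ) : Kc k = A (k ^ 2) 0 := by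
  unfold Kc A
  apply integral_congr
  intro z _
  simp [Q]

lemma Ec_eq {k : ℝ} (hc1 : k ^ 2 < 1) :
    Ec k = A (k ^ 2) 0 - k ^ 2 * A (k ^ 2) 2 := by
  have h1 : Ec k = ∫ z in (0:ℝ)..1, (1 - k ^ 2 * z ^ 2) / Real.sqrt (Q (k ^ 2) z) := by
    unfold Ec
    apply integral_congr
    intro z hz
    rw [uIcc_of_le (by norm_num : (0:ℝ) ≤ 1)] at hz
    obtain ⟨hz0, hz1⟩ := hz
    have hz2 : z ^ 2 ≤ 1 := by nlinarith
    have ha : 0 ≤ 1 - z ^ 2 := by linarith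
    have hb : 0 ≤ 1 - k ^ 2 * z ^ 2 := by nlinarith [sq_nonneg k, sq_nonneg z]
    show Real.sqrt (1 - k ^ 2 * z ^ 2) / Real.sqrt (1 - z ^ 2)
      = (1 - k ^ 2 * z ^ 2) / Real.sqrt (Q (k ^ 2) z)
    rw [show Q (k ^ 2) z = (1 - z ^ 2) * (1 - k ^ 2 * z ^ 2) from rfl,
      Real.sqrt_mul ha, mul_comm (Real.sqrt (1 - z ^ 2)), ← div_div, Real.div_sqrt]
  have h2 : ∀ z : ℝ, (1 - k ^ 2 * z ^ 2) / Real.sqrt (Q (k ^ 2) z)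
      = z ^ 0 / Real.sqrt (Q (k ^ 2) z) - k ^ 2 * (z ^ 2 / Real.sqrt (Q (k ^ 2) z)) := by
    intro z
    rw [pow_zero, ← mul_div_assoc, ← sub_div]
  rw [h1]
  simp only [h2]
  rw [integral_sub (intgA (sq_nonneg k) hc1 0) ((intgA (sq_nonneg k) hc1 2).const_mul _),
    intervalIntegral.integral_const_mul]
  rfl

lemma B_eq {c : ℝ} (hc0 : 0 ≤ c) (hc1 : c < 1) (j : ℕ) :
    ∫ z in (0:ℝ)..1, z ^ j * Real.sqrt (Q c z)
      = A c j - (1 + c) * A c (j + 2) + c * A c (j + 4) := by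
  have hpt : ∀ z : ℝ, z ^ j * Real.sqrt (Q c z)
      = z ^ j / Real.sqrt (Q c z) - (1 + c) * (z ^ (j + 2) / Real.sqrt (Q c z))
        + c * (z ^ (j + 4) / Real.sqrt (Q c z)) := by
    intro z
    rw [show z ^ j / Real.sqrt (Q c z) - (1 + c) * (z ^ (j + 2) / Real.sqrt (Q c z))
          + c * (z ^ (j + 4) / Real.sqrt (Q c z))
        = (z ^ j - (1 + c) * z ^ (j + 2) + c * z ^ (j + 4)) / Real.sqrt (Q c z) from by
          rw [← mul_div_assoc, ← mul_div_assoc, ← sub_div, ← add_div],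
      show z ^ j - (1 + c) * z ^ (j + 2) + c * z ^ (j + 4) = z ^ j * Q c z from by
        unfold Q; ring,
      mul_div_assoc, Real.div_sqrt]
  simp only [hpt]
  rw [integral_add (((intgA hc0 hc1 j).sub ((intgA hc0 hc1 (j+2)).const_mul _)))
      ((intgA hc0 hc1 (j+4)).const_mul _),
    integral_sub (intgA hc0 hc1 j) ((intgA hc0 hc1 (j+2)).const_mul _),
    intervalIntegral.integral_const_mul, intervalIntegral.integral_const_mul]
  rfl

lemma oddInt (c : ℝ) : ∫ z in (-1:ℝ)..1, z * Real.sqrt (Q c z) = 0 := by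
  have hQ : ∀ z : ℝ, Q c (-z) = Q c z := by
    intro z; unfold Q; ring
  have h := integral_comp_neg (a := (-1:ℝ)) (b := 1) (fun z => z * Real.sqrt (Q c z))
  simp only [hQ, neg_mul, neg_neg] at h
  rw [intervalIntegral.integral_neg] at h
  linarith [h]

lemma evenInt {c : ℝ} (hc0 : 0 ≤ c) (hc1 : c < 1) (j : ℕ) (hj : Even j) :
    ∫ z in (-1:ℝ)..1, z ^ j * Real.sqrt (Q c z)
      = 2 * (A c j - (1 + c) * A c (j + 2) + c * A c (j + 4)) := by
  have hQ : ∀ z : ℝ, Q c (-z) = Q c z := by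
    intro z; unfold Q; ring
  have hcont : Continuous (fun z => z ^ j * Real.sqrt (Q c z)) :=
    (continuous_pow j).mul (contS c)
  have h1 : ∫ z in (-1:ℝ)..0, z ^ j * Real.sqrt (Q c z)
      = ∫ z in (0:ℝ)..1, z ^ j * Real.sqrt (Q c z) := by
    have h := integral_comp_neg (a := (0:ℝ)) (b := 1) (fun z => z ^ j * Real.sqrt (Q c z))
    simp only [hQ, hj.neg_pow, neg_zero] at h
    exact h.symm
  rw [← integral_add_adjacent_intervals (a := (-1:ℝ)) (b := 0) (c := 1)
    (hcont.intervalIntegrable _ _) (hcont.intervalIntegrable _ _), h1, ← B_eq hc0 hc1 j]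
  ring


end EllAux

open EllAux in
/-- evaluation of `∫ x√(x⁴-2x³+x²-4h) dx` and `∫ x²√(x⁴-2x³+x²-4h) dx`
on `[x₀,x₁]` in terms of complete elliptic integrals, where `h = (1-u²)²/64`,
`x₀ = (1-u)/2`, `x₁ = (1+u)/2` and `k̃ = u/√(2-u²)`. -/
theorem integral_I20_I30 (u : ℝ) (hu : u ∈ Set.Ioo (0 : ℝ) 1) :
    (∫ x in ((1 - u) / 2)..((1 + u) / 2),
        x * Real.sqrt (x ^ 4 - 2 * x ^ 3 + x ^ 2 - 4 * ((1 - u ^ 2) ^ 2 / 64)))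
      = (Real.sqrt (2 - u ^ 2) / 12) *
          ((u ^ 2 - 1) * Kc (u / Real.sqrt (2 - u ^ 2))
            + Ec (u / Real.sqrt (2 - u ^ 2))) ∧
    (∫ x in ((1 - u) / 2)..((1 + u) / 2),
        x ^ 2 * Real.sqrt (x ^ 4 - 2 * x ^ 3 + x ^ 2 - 4 * ((1 - u ^ 2) ^ 2 / 64)))
      = (Real.sqrt (2 - u ^ 2) / 40) *
          ((u ^ 4 - 2 * u ^ 2 + 3) * Ec (u / Real.sqrt (2 - u ^ 2))
            - (u ^ 4 - 4 * u ^ 2 + 3) * Kc (u / Real.sqrt (2 - u ^ 2))) := by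
  obtain ⟨hu0, hu1⟩ := hu
  have h2u : (0:ℝ) < 2 - u ^ 2 := by nlinarith
  set w := Real.sqrt (2 - u ^ 2) with hwdef
  have hw2 : w ^ 2 = 2 - u ^ 2 := Real.sq_sqrt h2u.le
  have hwpos : 0 < w := Real.sqrt_pos.2 h2u
  have hk2 : (u / w) ^ 2 = u ^ 2 / (2 - u ^ 2) := by rw [div_pow, hw2]
  set c : ℝ := u ^ 2 / (2 - u ^ 2) with hcdef
  have hc0 : 0 < c := div_pos (by positivity) h2u
  have hc1 : c < 1 := by rw [hcdef, div_lt_one h2u]; nlinarith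
  have hKc : Kc (u / w) = A c 0 := by rw [Kc_eq, hk2]
  have hEc : Ec (u / w) = A c 0 - c * A c 2 := by
    rw [Ec_eq (by rw [hk2]; exact hc1), hk2]
  have hu2 : (u / 2 : ℝ) ≠ 0 := by positivity
  have hsub : ∀ F : ℝ → ℝ, (∫ x in ((1 - u) / 2)..((1 + u) / 2), F x)
      = (u / 2) • ∫ z in (-1:ℝ)..1, F (u / 2 * z + 1 / 2) := by
    intro F
    rw [integral_comp_mul_add F hu2 (1 / 2), smul_inv_smul₀ hu2]
    congr 1 <;> ring
  have hkey : ∀ z : ℝ, Real.sqrt ((u/2*z+1/2) ^ 4 - 2 * (u/2*z+1/2) ^ 3 + (u/2*z+1/2) ^ 2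
        - 4 * ((1 - u ^ 2) ^ 2 / 64))
      = (u * w / 4) * Real.sqrt (Q c z) := by
    intro z
    have hpoly : (u/2*z+1/2) ^ 4 - 2 * (u/2*z+1/2) ^ 3 + (u/2*z+1/2) ^ 2
        - 4 * ((1 - u ^ 2) ^ 2 / 64) = (u * w / 4) ^ 2 * Q c z := by
      rw [show (u * w / 4) ^ 2 = u ^ 2 * w ^ 2 / 16 from by ring, hw2, hcdef]
      unfold Q
      field_simp
      ring
    rw [hpoly, Real.sqrt_mul (by positivity), Real.sqrt_sq (by positivity)]
  -- relations
  have r0 := rel hc0.le hc1 0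
  have r2 := rel hc0.le hc1 2
  norm_num at r0 r2
  have hA4 : A c 4 = (2 * (1 + c) * A c 2 - A c 0) / (3 * c) := by
    field_simp
    linarith
  have hA6 : A c 6 = (4 * (1 + c) * A c 4 - 3 * A c 2) / (5 * c) := by
    field_simp
    linarith
  have hcont1 : Continuous (fun z : ℝ => u ^ 2 * w / 8 * (z * Real.sqrt (Q c z))) :=
    continuous_const.mul (continuous_id.mul (contS c))
  have hcont0 : Continuous (fun z : ℝ => u * w / 8 * (z ^ 0 * Real.sqrt (Q c z))) :=
    continuous_const.mul ((continuous_pow 0).mul (contS c))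
  constructor
  · rw [hsub (fun x => x * Real.sqrt (x ^ 4 - 2 * x ^ 3 + x ^ 2 - 4 * ((1 - u ^ 2) ^ 2 / 64)))]
    have hcongr : (∫ z in (-1:ℝ)..1,
          (fun x => x * Real.sqrt (x ^ 4 - 2 * x ^ 3 + x ^ 2 - 4 * ((1 - u ^ 2) ^ 2 / 64)))
            (u / 2 * z + 1 / 2))
        = ∫ z in (-1:ℝ)..1, (u ^ 2 * w / 8 * (z * Real.sqrt (Q c z))
            + u * w / 8 * (z ^ 0 * Real.sqrt (Q c z))) := by
      apply integral_congr
      intro z _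
      show (u / 2 * z + 1 / 2) * Real.sqrt ((u/2*z+1/2) ^ 4 - 2 * (u/2*z+1/2) ^ 3
          + (u/2*z+1/2) ^ 2 - 4 * ((1 - u ^ 2) ^ 2 / 64)) = _
      rw [hkey z]
      ring
    rw [hcongr, integral_add (hcont1.intervalIntegrable _ _) (hcont0.intervalIntegrable _ _),
      intervalIntegral.integral_const_mul, intervalIntegral.integral_const_mul, oddInt, evenInt hc0.le hc1 0 Even.zero]
    rw [hKc, hEc, smul_eq_mul]
    norm_num
    rw [hA4, hcdef]
    field_simp
    ring
  · rw [hsub (fun x => x ^ 2 * Real.sqrt (x ^ 4 - 2 * x ^ 3 + x ^ 2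
        - 4 * ((1 - u ^ 2) ^ 2 / 64)))]
    have hcont2 : Continuous (fun z : ℝ => u ^ 3 * w / 16 * (z ^ 2 * Real.sqrt (Q c z))) :=
      continuous_const.mul ((continuous_pow 2).mul (contS c))
    have hcont1' : Continuous (fun z : ℝ => u ^ 2 * w / 8 * (z * Real.sqrt (Q c z))) :=
      continuous_const.mul (continuous_id.mul (contS c))
    have hcont0' : Continuous (fun z : ℝ => u * w / 16 * (z ^ 0 * Real.sqrt (Q c z))) :=
      continuous_const.mul ((continuous_pow 0).mul (contS c))
    have hcongr : (∫ z in (-1:ℝ)..1,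
          (fun x => x ^ 2 * Real.sqrt (x ^ 4 - 2 * x ^ 3 + x ^ 2 - 4 * ((1 - u ^ 2) ^ 2 / 64)))
            (u / 2 * z + 1 / 2))
        = ∫ z in (-1:ℝ)..1, (u ^ 3 * w / 16 * (z ^ 2 * Real.sqrt (Q c z))
            + u ^ 2 * w / 8 * (z * Real.sqrt (Q c z))
            + u * w / 16 * (z ^ 0 * Real.sqrt (Q c z))) := by
      apply integral_congr
      intro z _
      show (u / 2 * z + 1 / 2) ^ 2 * Real.sqrt ((u/2*z+1/2) ^ 4 - 2 * (u/2*z+1/2) ^ 3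
          + (u/2*z+1/2) ^ 2 - 4 * ((1 - u ^ 2) ^ 2 / 64)) = _
      rw [hkey z]
      ring
    rw [hcongr,
      integral_add (show IntervalIntegrable
        (fun z => u ^ 3 * w / 16 * (z ^ 2 * Real.sqrt (Q c z))
          + u ^ 2 * w / 8 * (z * Real.sqrt (Q c z))) volume (-1) 1 from
          (hcont2.add hcont1').intervalIntegrable _ _)
        (hcont0'.intervalIntegrable _ _),
      integral_add (hcont2.intervalIntegrable _ _) (hcont1'.intervalIntegrable _ _),
      intervalIntegral.integral_const_mul, intervalIntegral.integral_const_mul, intervalIntegral.integral_const_mul, oddInt,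
      evenInt hc0.le hc1 0 Even.zero, evenInt hc0.le hc1 2 even_two]
    rw [hKc, hEc, smul_eq_mul]
    norm_num
    rw [hA6, hA4, hcdef]
    field_simp
    ring
end

section
/- Let Σ ⊂ ℝ be an open interval and let f₁, f₂ be real-analytic functions on Σ. Suppose that f₁ has only finitely many zeros in Σ and that the function f₁f₂′ − f₁′f₂ has only finitely many zeros in Σ. Then f₁ + f₂ has only finitely many zeros in Σ, and the number of zeros of f₁ + f₂ in Σ is at most (number of zeros of f₁ in Σ) + (number of zeros of f₁f₂′ − f₁′f₂ in Σ) + 1, where all zeros are counted with multiplicity. -/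
/-- Multiplicity (order of vanishing) of a zero of a real function. -/
noncomputable def zeroMult (φ : ℝ → ℝ) (x : ℝ) : ℕ :=
  sInf {n : ℕ | iteratedDeriv n φ x ≠ 0}

open Set Filter Topology

lemma zsL_iterW {f : ℝ → ℝ} {s : Set ℝ} (hs : IsOpen s) {x : ℝ} (hx : x ∈ s) (n : ℕ) :
    iteratedDeriv n f x = iteratedDerivWithin n f s x := by
  rw [iteratedDeriv_eq_iteratedFDeriv, iteratedDerivWithin_eq_iteratedFDerivWithin,
    iteratedFDerivWithin_of_isOpen n hs hx]

lemma zsL_iter_add {s : Set ℝ} (hs : IsOpen s) {u v : ℝ → ℝ} (hu : AnalyticOnNhd ℝ u s)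
    (hv : AnalyticOnNhd ℝ v s) {x : ℝ} (hx : x ∈ s) (n : ℕ) :
    iteratedDeriv n (fun y => u y + v y) x = iteratedDeriv n u x + iteratedDeriv n v x := by
  rw [zsL_iterW hs hx, zsL_iterW hs hx, zsL_iterW hs hx]
  exact iteratedDerivWithin_add hx hs.uniqueDiffOn (hu.contDiffOn hs.uniqueDiffOn x hx)
    (hv.contDiffOn hs.uniqueDiffOn x hx)

lemma zsL_iter_sub {s : Set ℝ} (hs : IsOpen s) {u v : ℝ → ℝ} (hu : AnalyticOnNhd ℝ u s)
    (hv : AnalyticOnNhd ℝ v s) {x : ℝ} (hx : x ∈ s) (n : ℕ) :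
    iteratedDeriv n (fun y => u y - v y) x = iteratedDeriv n u x - iteratedDeriv n v x := by
  rw [zsL_iterW hs hx, zsL_iterW hs hx, zsL_iterW hs hx]
  exact iteratedDerivWithin_sub hx hs.uniqueDiffOn (hu.contDiffOn hs.uniqueDiffOn x hx)
    (hv.contDiffOn hs.uniqueDiffOn x hx)

lemma zsL_van (n : ℕ) {s : Set ℝ} (hs : IsOpen s) {u v : ℝ → ℝ}
    (hu : AnalyticOnNhd ℝ u s) (hv : AnalyticOnNhd ℝ v s) {x : ℝ} (hx : x ∈ s) {p q : ℕ}
    (hup : ∀ j < p, iteratedDeriv j u x = 0) (hvq : ∀ j < q, iteratedDeriv j v x = 0)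
    (hn : n < p + q) :
    iteratedDeriv n (fun y => u y * v y) x = 0 := by
  induction n generalizing u v p q with
  | zero =>
    rw [iteratedDeriv_zero]
    rcases Nat.lt_or_ge 0 p with hp | hp
    · have := hup 0 hp
      rw [iteratedDeriv_zero] at this
      rw [this, zero_mul]
    · have hq : 0 < q := by omega
      have := hvq 0 hq
      rw [iteratedDeriv_zero] at this
      rw [this, mul_zero]
  | succ n ih =>
    rw [iteratedDeriv_succ']
    have hev : (deriv fun y => u y * v y) =ᶠ[𝓝 x]
        fun y => (deriv u y * v y + u y * deriv v y) := by
      filter_upwards [hs.mem_nhds hx] with y hy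
      exact deriv_mul ((hu y hy).differentiableAt) ((hv y hy).differentiableAt)
    rw [hev.iteratedDeriv_eq n]
    have hu' : AnalyticOnNhd ℝ (deriv u) s := hu.deriv
    have hv' : AnalyticOnNhd ℝ (deriv v) s := hv.deriv
    rw [zsL_iter_add hs (hu'.mul hv) (hu.mul hv') hx n]
    have e1 : iteratedDeriv n (fun y => deriv u y * v y) x = 0 := by
      refine ih hu' hv (p := p - 1) (q := q) (fun j hj => ?_) hvq (by omega)
      rw [← iteratedDeriv_succ']
      exact hup (j + 1) (by omega)
    have e2 : iteratedDeriv n (fun y => u y * deriv v y) x = 0 := by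
      refine ih hu hv' (p := p) (q := q - 1) hup (fun j hj => ?_) (by omega)
      rw [← iteratedDeriv_succ']
      exact hvq (j + 1) (by omega)
    rw [e1, e2, add_zero]

lemma zsL_ev_zero {φ : ℝ → ℝ} {x : ℝ} (hφ : AnalyticAt ℝ φ x)
    (h0 : ∀ n, iteratedDeriv n φ x = 0) : φ =ᶠ[𝓝 x] 0 := by
  obtain ⟨p, r, hp⟩ : ∃ p r, HasFPowerSeriesOnBall φ p x r := by
    obtain ⟨p, hp⟩ := hφ
    obtain ⟨r, hr⟩ := hp
    exact ⟨p, r, hr⟩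
  have key : ∀ y ∈ Metric.eball (0 : ℝ) r, φ (x + y) = 0 := by
    intro y hy
    have hsum := hp.hasSum_iteratedFDeriv hy
    have hz : ∀ n : ℕ, (n.factorial : ℝ)⁻¹ • iteratedFDeriv ℝ n φ x (fun _ ↦ y) = 0 := by
      intro n
      have h1 : (fun _ : Fin n => y) = fun _ : Fin n => y • (1 : ℝ) := by
        funext i; simp
      have h2 : iteratedFDeriv ℝ n φ x (fun _ ↦ y)
          = (∏ _i : Fin n, y) • iteratedFDeriv ℝ n φ x (fun _ ↦ (1 : ℝ)) := by
        rw [h1, (iteratedFDeriv ℝ n φ x).map_smul_univ]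
        simp
      rw [h2, ← iteratedDeriv_eq_iteratedFDeriv, h0 n]
      simp
    have hsum' : HasSum (fun _ : ℕ => (0 : ℝ)) (φ (x + y)) := by
      simpa only [hz] using hsum
    exact (hsum'.unique hasSum_zero)
  filter_upwards [EMetric.ball_mem_nhds x hp.r_pos] with z hz
  have hz' : z - x ∈ Metric.eball (0 : ℝ) r := by
    rw [EMetric.mem_ball] at hz ⊢
    rwa [← sub_self x, edist_sub_right]
  simpa using key (z - x) hz'

lemma zsL_zm_ge {φ : ℝ → ℝ} {x : ℝ} (hne : ∃ n, iteratedDeriv n φ x ≠ 0) {t : ℕ}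
    (hv : ∀ j < t, iteratedDeriv j φ x = 0) : t ≤ zeroMult φ x := by
  unfold zeroMult
  by_contra hcon
  push_neg at hcon
  have hmem := Nat.sInf_mem (s := {n : ℕ | iteratedDeriv n φ x ≠ 0}) hne
  exact hmem (hv _ hcon)

lemma zsL_zm_derivs {φ : ℝ → ℝ} {x : ℝ} {j : ℕ} (hj : j < zeroMult φ x) :
    iteratedDeriv j φ x = 0 := by
  unfold zeroMult at hj
  by_contra hcon
  have := Nat.sInf_le (show j ∈ {n : ℕ | iteratedDeriv n φ x ≠ 0} from hcon)
  omega

lemma zsL_zm_zero {φ : ℝ → ℝ} {x : ℝ} (hx : φ x ≠ 0) : zeroMult φ x = 0 := by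
  unfold zeroMult
  apply Nat.sInf_eq_zero.mpr
  left
  simpa [iteratedDeriv_zero] using hx

lemma zsL_zm_one {φ : ℝ → ℝ} {x : ℝ} (hne : ∃ n, iteratedDeriv n φ x ≠ 0)
    (hx : φ x = 0) : 1 ≤ zeroMult φ x := by
  apply zsL_zm_ge hne
  intro j hj
  interval_cases j
  simpa [iteratedDeriv_zero] using hx

/-- Lemma 3.6 of the paper: if `f₁` and `f₂` are real-analytic on the open
interval `(a,b)`, `f₁` has finitely many zeros there with total multiplicity at most `N₁`,
and `f₁f₂' - f₁'f₂` has finitely many zeros there with total multiplicity at most `N₂`,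
then `f₁ + f₂` has finitely many zeros in `(a,b)` and at most `N₁ + N₂ + 1` of them,
counted with multiplicity. -/
theorem zeros_of_sum_analytic (a b : ℝ) (f₁ f₂ : ℝ → ℝ)
    (h1 : AnalyticOnNhd ℝ f₁ (Set.Ioo a b))
    (h2 : AnalyticOnNhd ℝ f₂ (Set.Ioo a b))
    (hfin1 : {x ∈ Set.Ioo a b | f₁ x = 0}.Finite)
    (hfinW : {x ∈ Set.Ioo a b | f₁ x * deriv f₂ x - deriv f₁ x * f₂ x = 0}.Finite)
    (N₁ N₂ : ℕ)
    (hc1 : ∀ T : Finset ℝ, (∀ x ∈ T, x ∈ Set.Ioo a b ∧ f₁ x = 0) →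
      ∑ x ∈ T, zeroMult f₁ x ≤ N₁)
    (hcW : ∀ T : Finset ℝ,
      (∀ x ∈ T, x ∈ Set.Ioo a b ∧ f₁ x * deriv f₂ x - deriv f₁ x * f₂ x = 0) →
      ∑ x ∈ T, zeroMult (fun x => f₁ x * deriv f₂ x - deriv f₁ x * f₂ x) x ≤ N₂) :
    {x ∈ Set.Ioo a b | f₁ x + f₂ x = 0}.Finite ∧
    ∀ T : Finset ℝ, (∀ x ∈ T, x ∈ Set.Ioo a b ∧ f₁ x + f₂ x = 0) →
      ∑ x ∈ T, zeroMult (fun x => f₁ x + f₂ x) x ≤ N₁ + N₂ + 1 := by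
  rcases le_or_gt b a with hba | hab
  · have hempty : Set.Ioo a b = ∅ := Set.Ioo_eq_empty (not_lt.mpr hba)
    constructor
    · rw [hempty]
      simp
    · intro T hT
      have hTe : T = ∅ := by
        refine Finset.eq_empty_of_forall_notMem fun x hx => ?_
        have := (hT x hx).1
        rw [hempty] at this
        exact this
      simp [hTe]
  · set W : ℝ → ℝ := fun x => f₁ x * deriv f₂ x - deriv f₁ x * f₂ x with hWdef
    set h : ℝ → ℝ := fun x => f₁ x + f₂ x with hhdef
    have hio : IsOpen (Set.Ioo a b) := isOpen_Ioo
    have hco : IsPreconnected (Set.Ioo a b) := isPreconnected_Ioo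
    have hINF : (Set.Ioo a b).Infinite := Set.Ioo_infinite hab
    have hh : AnalyticOnNhd ℝ h (Set.Ioo a b) := h1.add h2
    have hWan : AnalyticOnNhd ℝ W (Set.Ioo a b) := (h1.mul h2.deriv).sub (h1.deriv.mul h2)
    have hWid : ∀ y ∈ Set.Ioo a b, W y = deriv h y * f₁ y - h y * deriv f₁ y := by
      intro y hy
      have hd : deriv h y = deriv f₁ y + deriv f₂ y := by
        rw [hhdef]
        exact deriv_add ((h1 y hy).differentiableAt) ((h2 y hy).differentiableAt)
      rw [hWdef, hhdef, hd]
      ring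
    have hne1 : ∀ x ∈ Set.Ioo a b, ∃ n, iteratedDeriv n f₁ x ≠ 0 := by
      intro x hx
      by_contra hcon
      push_neg at hcon
      have hEq : Set.EqOn f₁ 0 (Set.Ioo a b) :=
        h1.eqOn_zero_of_preconnected_of_eventuallyEq_zero hco hx (zsL_ev_zero (h1 x hx) hcon)
      have hsub : Set.Ioo a b ⊆ {x ∈ Set.Ioo a b | f₁ x = 0} := fun y hy => ⟨hy, hEq hy⟩
      exact (hINF.mono hsub) hfin1
    have hneW : ∀ x ∈ Set.Ioo a b, ∃ n, iteratedDeriv n W x ≠ 0 := by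
      intro x hx
      by_contra hcon
      push_neg at hcon
      have hEq : Set.EqOn W 0 (Set.Ioo a b) :=
        hWan.eqOn_zero_of_preconnected_of_eventuallyEq_zero hco hx (zsL_ev_zero (hWan x hx) hcon)
      have hsub : Set.Ioo a b ⊆ {x ∈ Set.Ioo a b | W x = 0} := fun y hy => ⟨hy, hEq hy⟩
      exact (hINF.mono hsub) hfinW
    have hneh : ∀ x ∈ Set.Ioo a b, ∃ n, iteratedDeriv n h x ≠ 0 := by
      intro x hx
      by_contra hcon
      push_neg at hcon
      have hEq : Set.EqOn h 0 (Set.Ioo a b) :=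
        hh.eqOn_zero_of_preconnected_of_eventuallyEq_zero hco hx (zsL_ev_zero (hh x hx) hcon)
      have hW0 : ∀ y ∈ Set.Ioo a b, W y = 0 := by
        intro y hy
        have hev : h =ᶠ[𝓝 y] 0 := by
          filter_upwards [hio.mem_nhds hy] with z hz
          exact hEq hz
        have hder : deriv h y = 0 := by
          rw [hev.deriv_eq]
          exact deriv_const y 0
        rw [hWid y hy, hder, hEq hy]
        simp
      have hsub : Set.Ioo a b ⊆ {x ∈ Set.Ioo a b | W x = 0} := fun y hy => ⟨hy, hW0 y hy⟩
      exact (hINF.mono hsub) hfinW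
    have ptB : ∀ x ∈ Set.Ioo a b, h x = 0 → ∀ n, n + 1 < zeroMult h x + zeroMult f₁ x →
        iteratedDeriv n W x = 0 := by
      intro x hx hhx n hn
      have hWev : W =ᶠ[𝓝 x] fun y => deriv h y * f₁ y - h y * deriv f₁ y := by
        filter_upwards [hio.mem_nhds hx] with y hy
        exact hWid y hy
      rw [hWev.iteratedDeriv_eq n]
      rw [zsL_iter_sub hio (hh.deriv.mul h1) (hh.mul h1.deriv) hx n]
      have e1 : iteratedDeriv n (fun y => deriv h y * f₁ y) x = 0 := by
        refine zsL_van n hio hh.deriv h1 hx (p := zeroMult h x - 1) (q := zeroMult f₁ x)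
          (fun j hj => ?_) (fun j hj => zsL_zm_derivs hj) (by omega)
        rw [← iteratedDeriv_succ']
        exact zsL_zm_derivs (by omega)
      have e2 : iteratedDeriv n (fun y => h y * deriv f₁ y) x = 0 := by
        refine zsL_van n hio hh h1.deriv hx (p := zeroMult h x) (q := zeroMult f₁ x - 1)
          (fun j hj => zsL_zm_derivs hj) (fun j hj => ?_) (by omega)
        rw [← iteratedDeriv_succ']
        exact zsL_zm_derivs (by omega)
      rw [e1, e2, sub_zero]
    have point : ∀ x ∈ Set.Ioo a b, h x = 0 →
        ∃ A₀ B₀ : Finset ℝ,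
          (∀ y ∈ A₀, y ∈ Set.Ioo a b ∧ f₁ y = 0 ∧ y = x) ∧
          (∀ y ∈ B₀, y ∈ Set.Ioo a b ∧ W y = 0 ∧ y = x) ∧
          zeroMult f₁ x = ∑ y ∈ A₀, zeroMult f₁ y ∧
          zeroMult h x + zeroMult f₁ x ≤ 1 + ∑ y ∈ B₀, zeroMult W y := by
      intro x hx hhx
      by_cases hk2 : 2 ≤ zeroMult h x + zeroMult f₁ x
      · have hW0 : W x = 0 := by
          have := ptB x hx hhx 0 (by omega)
          rwa [iteratedDeriv_zero] at this
        have hBW : zeroMult h x + zeroMult f₁ x - 1 ≤ zeroMult W x :=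
          zsL_zm_ge (hneW x hx) (fun j hj => ptB x hx hhx j (by omega))
        by_cases hf0 : f₁ x = 0
        · refine ⟨{x}, {x}, by simp [hx.1, hx.2, hf0], by simp [hx.1, hx.2, hW0], by simp, ?_⟩
          rw [Finset.sum_singleton]
          omega
        · have hm0 : zeroMult f₁ x = 0 := zsL_zm_zero hf0
          refine ⟨∅, {x}, by simp, by simp [hx.1, hx.2, hW0], by simp [hm0], ?_⟩
          rw [Finset.sum_singleton]
          omega
      · have hk1 : 1 ≤ zeroMult h x := zsL_zm_one (hneh x hx) hhx
        have hf0 : f₁ x ≠ 0 := by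
          intro hf0
          have hm1 : 1 ≤ zeroMult f₁ x := zsL_zm_one (hne1 x hx) hf0
          omega
        have hm0 : zeroMult f₁ x = 0 := zsL_zm_zero hf0
        refine ⟨∅, ∅, by simp, by simp, by simp [hm0], ?_⟩
        rw [Finset.sum_empty]
        omega
    have gap : ∀ x x₀ : ℝ, x ∈ Set.Ioo a b → x₀ ∈ Set.Ioo a b → x < x₀ → h x = 0 → h x₀ = 0 →
        f₁ x ≠ 0 → f₁ x₀ ≠ 0 → (∀ y ∈ Set.Ioo x x₀, f₁ y ≠ 0) →
        ∃ c ∈ Set.Ioo x x₀, W c = 0 := by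
      intro x x₀ hx hx₀ hlt hhx hhx₀ hf hf₀ hgap
      have hsub : Set.Icc x x₀ ⊆ Set.Ioo a b := by
        intro y hy
        exact ⟨lt_of_lt_of_le hx.1 hy.1, lt_of_le_of_lt hy.2 hx₀.2⟩
      have hf1ne : ∀ y ∈ Set.Icc x x₀, f₁ y ≠ 0 := by
        intro y hy
        rcases eq_or_lt_of_le hy.1 with heq | hlt1
        · rw [← heq]
          exact hf
        rcases eq_or_lt_of_le hy.2 with heq | hlt2
        · rw [heq]
          exact hf₀
        · exact hgap y ⟨hlt1, hlt2⟩
      have hcont : ContinuousOn (fun y => h y / f₁ y) (Set.Icc x x₀) := by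
        apply ContinuousOn.div
        · exact fun y hy => ((hh y (hsub hy)).continuousAt).continuousWithinAt
        · exact fun y hy => ((h1 y (hsub hy)).continuousAt).continuousWithinAt
        · exact hf1ne
      obtain ⟨c, hc, hc0⟩ := exists_deriv_eq_zero hlt hcont (by rw [hhx, hhx₀, zero_div, zero_div])
      refine ⟨c, hc, ?_⟩
      have hcio : c ∈ Set.Ioo a b := hsub ⟨le_of_lt hc.1, le_of_lt hc.2⟩
      have hfc : f₁ c ≠ 0 := hgap c hc
      have hd : deriv (fun y => h y / f₁ y) c =
          (deriv h c * f₁ c - h c * deriv f₁ c) / (f₁ c) ^ 2 :=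
        deriv_div ((hh c hcio).differentiableAt) ((h1 c hcio).differentiableAt) hfc
      rw [hd] at hc0
      have hnum : deriv h c * f₁ c - h c * deriv f₁ c = 0 := by
        rcases div_eq_zero_iff.mp hc0 with hn | hsq
        · exact hn
        · exact absurd hsq (pow_ne_zero 2 hfc)
      rw [hWid c hcio, hnum]
    have main : ∀ (l : List ℝ) (x : ℝ), x ∈ Set.Ioo a b → h x = 0 →
        List.Chain' (· < ·) (x :: l) → (∀ y ∈ l, y ∈ Set.Ioo a b ∧ h y = 0) →
        ∃ A B : Finset ℝ,
          (∀ y ∈ A, y ∈ Set.Ioo a b ∧ f₁ y = 0 ∧ x ≤ y) ∧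
          (∀ y ∈ B, y ∈ Set.Ioo a b ∧ W y = 0 ∧ x ≤ y) ∧
          zeroMult h x + (l.map (zeroMult h)).sum + zeroMult f₁ x ≤
            1 + ∑ y ∈ A, zeroMult f₁ y + ∑ y ∈ B, zeroMult W y := by
      intro l
      induction l with
      | nil =>
        intro x hx hhx _ _
        obtain ⟨A₀, B₀, hA₀, hB₀, hAs, hBs⟩ := point x hx hhx
        refine ⟨A₀, B₀, ?_, ?_, ?_⟩
        · intro y hy
          obtain ⟨h1', h2', h3'⟩ := hA₀ y hy
          exact ⟨h1', h2', le_of_eq h3'.symm⟩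
        · intro y hy
          obtain ⟨h1', h2', h3'⟩ := hB₀ y hy
          exact ⟨h1', h2', le_of_eq h3'.symm⟩
        · simp only [List.map_nil, List.sum_nil, add_zero]
          omega
      | cons x₀ l' ih =>
        intro x hx hhx hch hl
        have hxx₀ : x < x₀ := (List.isChain_cons_cons.mp hch).1
        have hch' : List.Chain' (· < ·) (x₀ :: l') := (List.isChain_cons_cons.mp hch).2
        have hx₀ : x₀ ∈ Set.Ioo a b := (hl x₀ (by simp)).1
        have hhx₀ : h x₀ = 0 := (hl x₀ (by simp)).2
        obtain ⟨A', B', hA', hB', hs'⟩ := ih x₀ hx₀ hhx₀ hch'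
          (fun y hy => hl y (by simp [hy]))
        obtain ⟨A₀, B₀, hA₀, hB₀, hAs, hBs⟩ := point x hx hhx
        obtain ⟨EA, EB, hEA, hEB, hgain⟩ :
            ∃ EA EB : Finset ℝ,
              (∀ y ∈ EA, y ∈ Set.Ioo a b ∧ f₁ y = 0 ∧ x < y ∧ y < x₀) ∧
              (∀ y ∈ EB, y ∈ Set.Ioo a b ∧ W y = 0 ∧ x < y ∧ y < x₀) ∧
              (1 ≤ ∑ y ∈ EA, zeroMult f₁ y + ∑ y ∈ EB, zeroMult W y + zeroMult f₁ x₀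
                ∨ 1 ≤ zeroMult f₁ x) := by
          by_cases hf0 : f₁ x = 0
          · exact ⟨∅, ∅, by simp, by simp, Or.inr (zsL_zm_one (hne1 x hx) hf0)⟩
          by_cases hf₀0 : f₁ x₀ = 0
          · refine ⟨∅, ∅, by simp, by simp, Or.inl ?_⟩
            have := zsL_zm_one (hne1 x₀ hx₀) hf₀0
            omega
          by_cases hgapz : ∃ y ∈ Set.Ioo x x₀, f₁ y = 0
          · obtain ⟨y, hy, hfy⟩ := hgapz
            have hyio : y ∈ Set.Ioo a b := ⟨lt_trans hx.1 hy.1, lt_trans hy.2 hx₀.2⟩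
            refine ⟨{y}, ∅, by simp [hyio.1, hyio.2, hfy, hy.1, hy.2], by simp, Or.inl ?_⟩
            have := zsL_zm_one (hne1 y hyio) hfy
            rw [Finset.sum_singleton]
            omega
          · push_neg at hgapz
            obtain ⟨c, hc, hWc⟩ := gap x x₀ hx hx₀ hxx₀ hhx hhx₀ hf0 hf₀0 hgapz
            have hcio : c ∈ Set.Ioo a b := ⟨lt_trans hx.1 hc.1, lt_trans hc.2 hx₀.2⟩
            refine ⟨∅, {c}, by simp, by simp [hcio.1, hcio.2, hWc, hc.1, hc.2], Or.inl ?_⟩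
            have := zsL_zm_one (hneW c hcio) hWc
            rw [Finset.sum_singleton, Finset.sum_empty]
            omega
        -- assemble
        have hdA1 : Disjoint A₀ EA := by
          rw [Finset.disjoint_left]
          intro y hy hy'
          have h1' := (hA₀ y hy).2.2
          have h2' := (hEA y hy').2.2.1
          linarith
        have hdA2 : Disjoint (A₀ ∪ EA) A' := by
          rw [Finset.disjoint_left]
          intro y hy hy'
          have h2' := (hA' y hy').2.2
          rcases Finset.mem_union.mp hy with hy1 | hy1
          · have h1' := (hA₀ y hy1).2.2
            linarith
          · have h1' := (hEA y hy1).2.2.2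
            linarith
        have hdB1 : Disjoint B₀ EB := by
          rw [Finset.disjoint_left]
          intro y hy hy'
          have h1' := (hB₀ y hy).2.2
          have h2' := (hEB y hy').2.2.1
          linarith
        have hdB2 : Disjoint (B₀ ∪ EB) B' := by
          rw [Finset.disjoint_left]
          intro y hy hy'
          have h2' := (hB' y hy').2.2
          rcases Finset.mem_union.mp hy with hy1 | hy1
          · have h1' := (hB₀ y hy1).2.2
            linarith
          · have h1' := (hEB y hy1).2.2.2
            linarith
        refine ⟨A₀ ∪ EA ∪ A', B₀ ∪ EB ∪ B', ?_, ?_, ?_⟩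
        · intro y hy
          rcases Finset.mem_union.mp hy with hy1 | hy1
          · rcases Finset.mem_union.mp hy1 with hy2 | hy2
            · obtain ⟨p1, p2, p3⟩ := hA₀ y hy2
              exact ⟨p1, p2, le_of_eq p3.symm⟩
            · obtain ⟨p1, p2, p3, _⟩ := hEA y hy2
              exact ⟨p1, p2, le_of_lt p3⟩
          · obtain ⟨p1, p2, p3⟩ := hA' y hy1
            exact ⟨p1, p2, le_of_lt (lt_of_lt_of_le hxx₀ p3)⟩
        · intro y hy
          rcases Finset.mem_union.mp hy with hy1 | hy1
          · rcases Finset.mem_union.mp hy1 with hy2 | hy2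
            · obtain ⟨p1, p2, p3⟩ := hB₀ y hy2
              exact ⟨p1, p2, le_of_eq p3.symm⟩
            · obtain ⟨p1, p2, p3, _⟩ := hEB y hy2
              exact ⟨p1, p2, le_of_lt p3⟩
          · obtain ⟨p1, p2, p3⟩ := hB' y hy1
            exact ⟨p1, p2, le_of_lt (lt_of_lt_of_le hxx₀ p3)⟩
        · rw [Finset.sum_union hdA2, Finset.sum_union hdA1,
            Finset.sum_union hdB2, Finset.sum_union hdB1]
          simp only [List.map_cons, List.sum_cons]
          omega
    have bound : ∀ T : Finset ℝ, (∀ y ∈ T, y ∈ Set.Ioo a b ∧ h y = 0) →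
        ∑ y ∈ T, zeroMult h y ≤ N₁ + N₂ + 1 := by
      intro T hT
      rcases eq_or_ne T ∅ with rfl | hTne
      · simp
      obtain ⟨x, l, hxl⟩ : ∃ x l, T.sort (· ≤ ·) = x :: l := by
        cases hsort : T.sort (· ≤ ·) with
        | nil =>
          exfalso
          apply hTne
          have hperm0 := Finset.sort_perm_toList T (· ≤ ·)
          rw [hsort] at hperm0
          exact Finset.toList_eq_nil.mp (List.Perm.nil_eq hperm0).symm
        | cons x l => exact ⟨x, l, rfl⟩
      have hsorted : List.SortedLT (x :: l) := hxl ▸ Finset.sortedLT_sort T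
      have hch : List.Chain' (· < ·) (x :: l) := List.sortedLT_iff_isChain.mp hsorted
      have hmem : ∀ y ∈ (x :: l), y ∈ Set.Ioo a b ∧ h y = 0 := by
        intro y hy
        apply hT
        have hy' : y ∈ T.sort (· ≤ ·) := by
          rw [hxl]
          exact hy
        exact (Finset.mem_sort _).mp hy'
      have hx := (hmem x (by simp)).1
      have hhx := (hmem x (by simp)).2
      obtain ⟨A, B, hA, hB, hsum⟩ := main l x hx hhx hch (fun y hy => hmem y (by simp [hy]))
      have hperm : (x :: l).Perm T.toList := by
        rw [← hxl]
        exact Finset.sort_perm_toList T _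
      have hTsum : ∑ y ∈ T, zeroMult h y = ((x :: l).map (zeroMult h)).sum := by
        rw [← Finset.sum_map_toList]
        exact ((hperm.map (zeroMult h)).sum_eq).symm
      rw [hTsum]
      have hN1 := hc1 A (fun y hy => ⟨(hA y hy).1, (hA y hy).2.1⟩)
      have hN2 := hcW B (fun y hy => ⟨(hB y hy).1, (hB y hy).2.1⟩)
      simp only [List.map_cons, List.sum_cons] at hsum ⊢
      omega
    constructor
    · by_contra hinf
      have hZinf : {x ∈ Set.Ioo a b | h x = 0}.Infinite := hinf
      obtain ⟨T, hTsub, hTcard⟩ := hZinf.exists_subset_card_eq (N₁ + N₂ + 2)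
      have hT : ∀ y ∈ T, y ∈ Set.Ioo a b ∧ h y = 0 := fun y hy => hTsub hy
      have hb := bound T hT
      have hcard : T.card ≤ ∑ y ∈ T, zeroMult h y := by
        rw [Finset.card_eq_sum_ones]
        apply Finset.sum_le_sum
        intro y hy
        exact zsL_zm_one (hneh y (hT y hy).1) (hT y hy).2
      omega
    · exact bound
end
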